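/- arXiv:2507.02720 — 5 statements merged into one kernel-verified Lean document; each statement's English description precedes it below -/
import Mathlib

section
/- For every integer n ≥ 0 and every integer α ≥ 2, the number of (2^α, 3)-biregular overpartitions of 4n+2 is divisible by 4, i.e. B̄_{2^α,3}(4n+2) ≡ 0 (mod 4). -/
open Multiset

/-- The number of `(ℓ₁, ℓ₂)`-biregular overpartitions of `n`: an overpartition is a pair
`(s, t)` of multisets of positive parts, where `t` (the multiset of overlined parts) has
distinct parts, and the sizes sum to `n`; here additionally no part may be divisible by
`ℓ₁` or by `ℓ₂`. -/
noncomputable def biregularOverpartitions (ℓ₁ ℓ₂ n : ℕ) : ℕ :=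
  Set.ncard {p : Multiset ℕ × Multiset ℕ |
    (∀ x ∈ p.1, 0 < x ∧ ¬ ℓ₁ ∣ x ∧ ¬ ℓ₂ ∣ x) ∧
    (∀ x ∈ p.2, 0 < x ∧ ¬ ℓ₁ ∣ x ∧ ¬ ℓ₂ ∣ x) ∧
    p.2.Nodup ∧ p.1.sum + p.2.sum = n}

namespace BOP

/-- goodness of a part -/
def Gd (α x : ℕ) : Prop := 0 < x ∧ ¬ (2^α : ℕ) ∣ x ∧ ¬ (3:ℕ) ∣ x

/-- the set of biregular overpartitions, stated via the total multiset -/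
def XS (n α : ℕ) : Set (Multiset ℕ × Multiset ℕ) :=
  {p | (∀ x ∈ p.1 + p.2, Gd α x) ∧ p.2.Nodup ∧ (p.1 + p.2).sum = 4*n+2}

def FS (p : Multiset ℕ × Multiset ℕ) : Finset ℕ := (p.1 + p.2).toFinset

noncomputable def Mx (p : Multiset ℕ × Multiset ℕ) : ℕ :=
  if h : (FS p).Nonempty then (FS p).max' h else 0

noncomputable def mn (p : Multiset ℕ × Multiset ℕ) : ℕ :=
  if h : (FS p).Nonempty then (FS p).min' h else 0

/-- toggle the overline status of part size `s` -/
def tog (s : ℕ) (p : Multiset ℕ × Multiset ℕ) : Multiset ℕ × Multiset ℕ :=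
  if s ∈ p.2 then (s ::ₘ p.1, p.2.erase s) else (p.1.erase s, s ::ₘ p.2)

variable {n α : ℕ} {p : Multiset ℕ × Multiset ℕ} {s : ℕ}

lemma tog_add (hs : s ∈ p.1 + p.2) :
    (tog s p).1 + (tog s p).2 = p.1 + p.2 := by
  by_cases h : s ∈ p.2
  · have ht : tog s p = (s ::ₘ p.1, p.2.erase s) := by rw [tog, if_pos h]
    rw [ht]
    show s ::ₘ p.1 + p.2.erase s = p.1 + p.2
    rw [Multiset.cons_add, ← Multiset.add_cons, Multiset.cons_erase h]
  · have hs1 : s ∈ p.1 := by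
      rcases Multiset.mem_add.mp hs with h1 | h2
      · exact h1
      · exact absurd h2 h
    have ht : tog s p = (p.1.erase s, s ::ₘ p.2) := by rw [tog, if_neg h]
    rw [ht]
    show p.1.erase s + (s ::ₘ p.2) = p.1 + p.2
    rw [Multiset.add_cons, ← Multiset.cons_add, Multiset.cons_erase hs1]

lemma tog_nodup (hnd : p.2.Nodup) : (tog s p).2.Nodup := by
  unfold tog
  by_cases h : s ∈ p.2
  · rw [if_pos h]; exact hnd.erase s
  · rw [if_neg h]; exact Multiset.nodup_cons.mpr ⟨h, hnd⟩

lemma mem_tog_self (hnd : p.2.Nodup) : s ∈ (tog s p).2 ↔ s ∉ p.2 := by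
  by_cases h : s ∈ p.2
  · have ht : tog s p = (s ::ₘ p.1, p.2.erase s) := by rw [tog, if_pos h]
    rw [ht]
    show s ∈ p.2.erase s ↔ s ∉ p.2
    constructor
    · intro hmem; exact absurd hmem hnd.notMem_erase
    · intro hns; exact absurd h hns
  · have ht : tog s p = (p.1.erase s, s ::ₘ p.2) := by rw [tog, if_neg h]
    rw [ht]
    show s ∈ s ::ₘ p.2 ↔ s ∉ p.2
    simp [h]

lemma mem_tog_ne {r : ℕ} (hrs : r ≠ s) : r ∈ (tog s p).2 ↔ r ∈ p.2 := by
  by_cases h : s ∈ p.2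
  · have ht : tog s p = (s ::ₘ p.1, p.2.erase s) := by rw [tog, if_pos h]
    rw [ht]
    show r ∈ p.2.erase s ↔ r ∈ p.2
    exact Multiset.mem_erase_of_ne hrs
  · have ht : tog s p = (p.1.erase s, s ::ₘ p.2) := by rw [tog, if_neg h]
    rw [ht]
    show r ∈ s ::ₘ p.2 ↔ r ∈ p.2
    simp [Multiset.mem_cons, hrs]

lemma tog_tog (hs : s ∈ p.1 + p.2) (hnd : p.2.Nodup) : tog s (tog s p) = p := by
  by_cases h : s ∈ p.2
  · have ht : tog s p = (s ::ₘ p.1, p.2.erase s) := by rw [tog, if_pos h]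
    rw [ht, tog]
    rw [if_neg (show s ∉ (s ::ₘ p.1, p.2.erase s).2 from hnd.notMem_erase)]
    exact Prod.ext (Multiset.erase_cons_head s p.1) (Multiset.cons_erase h)
  · have hs1 : s ∈ p.1 := by
      rcases Multiset.mem_add.mp hs with h1 | h2
      · exact h1
      · exact absurd h2 h
    have ht : tog s p = (p.1.erase s, s ::ₘ p.2) := by rw [tog, if_neg h]
    rw [ht, tog]
    rw [if_pos (show s ∈ (p.1.erase s, s ::ₘ p.2).2 from Multiset.mem_cons_self s p.2)]
    exact Prod.ext (Multiset.cons_erase hs1) (Multiset.erase_cons_head s p.2)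

lemma tog_memXS (hp : p ∈ XS n α) (hs : s ∈ p.1 + p.2) : tog s p ∈ XS n α := by
  obtain ⟨h1, h2, h3⟩ := hp
  refine ⟨?_, tog_nodup h2, ?_⟩
  · rw [tog_add hs]; exact h1
  · rw [tog_add hs]; exact h3

lemma FS_tog (hs : s ∈ p.1 + p.2) : FS (tog s p) = FS p := by
  simp only [FS]; rw [tog_add hs]

lemma Mx_congr {q : Multiset ℕ × Multiset ℕ} (h : FS q = FS p) : Mx q = Mx p := by
  unfold Mx; rw [h]

lemma mn_congr {q : Multiset ℕ × Multiset ℕ} (h : FS q = FS p) : mn q = mn p := by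
  unfold mn; rw [h]

lemma FS_ne (hp : p ∈ XS n α) : (FS p).Nonempty := by
  simp only [FS]
  rw [Multiset.toFinset_nonempty]
  intro h
  have := hp.2.2
  rw [h] at this
  simp at this

lemma Mx_mem (hp : p ∈ XS n α) : Mx p ∈ p.1 + p.2 := by
  have h := FS_ne hp
  rw [Mx, dif_pos h]
  have := (FS p).max'_mem h
  simpa only [FS, Multiset.mem_toFinset] using this

lemma le_Mx (hp : p ∈ XS n α) {x : ℕ} (hx : x ∈ p.1 + p.2) : x ≤ Mx p := by
  have h := FS_ne hp
  rw [Mx, dif_pos h]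
  exact (FS p).le_max' x (by simpa only [FS, Multiset.mem_toFinset] using hx)

lemma mn_mem (hp : p ∈ XS n α) : mn p ∈ p.1 + p.2 := by
  have h := FS_ne hp
  rw [mn, dif_pos h]
  have := (FS p).min'_mem h
  simpa only [FS, Multiset.mem_toFinset] using this

lemma mn_le (hp : p ∈ XS n α) {x : ℕ} (hx : x ∈ p.1 + p.2) : mn p ≤ x := by
  have h := FS_ne hp
  rw [mn, dif_pos h]
  exact (FS p).min'_le x (by simpa only [FS, Multiset.mem_toFinset] using hx)

/-! ### replicate pairs -/

lemma FS_repl {K D : ℕ} (hK : K ≠ 0) :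
    FS (Multiset.replicate K D, (0 : Multiset ℕ)) = {D} := by
  show (Multiset.replicate K D + 0).toFinset = {D}
  rw [add_zero, Multiset.toFinset_replicate, if_neg hK]

lemma Mx_repl {K D : ℕ} (hK : K ≠ 0) :
    Mx (Multiset.replicate K D, (0 : Multiset ℕ)) = D := by
  rw [Mx]
  have h : FS (Multiset.replicate K D, (0 : Multiset ℕ)) = {D} := FS_repl hK
  rw [h, dif_pos (Finset.singleton_nonempty D)]
  exact Finset.max'_singleton D

lemma mn_repl {K D : ℕ} (hK : K ≠ 0) :
    mn (Multiset.replicate K D, (0 : Multiset ℕ)) = D := by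
  rw [mn]
  have h : FS (Multiset.replicate K D, (0 : Multiset ℕ)) = {D} := FS_repl hK
  rw [h, dif_pos (Finset.singleton_nonempty D)]
  exact Finset.min'_singleton D

lemma repl_memXS {K D : ℕ} (hK : 0 < K) (hD : Gd α D) (hsum : K * D = 4*n+2) :
    (Multiset.replicate K D, (0 : Multiset ℕ)) ∈ XS n α := by
  refine ⟨?_, Multiset.nodup_zero, ?_⟩
  · intro x hx
    have hx' : x ∈ Multiset.replicate K D := by simpa using hx
    rw [Multiset.eq_of_mem_replicate hx']
    exact hD
  · show (Multiset.replicate K D + 0).sum = 4*n+2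
    rw [add_zero, Multiset.sum_replicate, smul_eq_mul, hsum]

/-! ### structure of single-size elements -/

lemma single_structure (hp : p ∈ XS n α) (h1 : mn p = Mx p) (h2 : Mx p ∉ p.2) :
    p = (Multiset.replicate (Multiset.card p.1) (mn p), 0) ∧
      (Multiset.card p.1) * mn p = 4*n+2 ∧ 0 < Multiset.card p.1 ∧ Gd α (mn p) := by
  have key : ∀ x ∈ p.1 + p.2, x = mn p := by
    intro x hx
    have hle := le_Mx hp hx
    have hge := mn_le hp hx
    omega
  have hp2 : p.2 = 0 := by
    apply Multiset.eq_zero_of_forall_notMem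
    intro x hx
    have := key x (Multiset.mem_add.mpr (Or.inr hx))
    rw [this, h1] at hx
    exact h2 hx
  have hp1 : p.1 = Multiset.replicate (Multiset.card p.1) (mn p) := by
    rw [Multiset.eq_replicate_card]
    intro b hb
    exact key b (Multiset.mem_add.mpr (Or.inl hb))
  have hsum : (Multiset.card p.1) * mn p = 4*n+2 := by
    have h3 := hp.2.2
    rw [hp2, add_zero] at h3
    conv_lhs at h3 => rw [hp1]
    rw [Multiset.sum_replicate, smul_eq_mul] at h3
    exact h3
  have hpos : 0 < Multiset.card p.1 := by
    rcases Nat.eq_zero_or_pos (Multiset.card p.1) with h | h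
    · rw [h] at hsum; omega
    · exact h
  exact ⟨Prod.ext hp1 hp2, hsum, hpos, hp.1 (mn p) (mn_mem hp)⟩

/-! ### arithmetic helpers -/

lemma good_double (hα : 2 ≤ α) {d : ℕ} (hd : Gd α d) (ho : ¬ 2 ∣ d) : Gd α (2*d) := by
  obtain ⟨hpos, h2a, h3⟩ := hd
  refine ⟨by omega, ?_, ?_⟩
  · intro h
    have h4 : (4:ℕ) ∣ 2*d := by
      calc (4:ℕ) = 2^2 := by norm_num
      _ ∣ 2^α := pow_dvd_pow 2 hα
      _ ∣ 2*d := h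
    omega
  · intro h
    rcases (Nat.Prime.dvd_mul Nat.prime_three).mp h with h' | h'
    · omega
    · exact h3 h'

/-! ### the raw second involution -/

noncomputable def iota2 (p : Multiset ℕ × Multiset ℕ) : Multiset ℕ × Multiset ℕ :=
  if mn p = Mx p then
    (if 2 ∣ mn p then (Multiset.replicate (2 * Multiset.card p.1) (mn p / 2), 0)
     else (Multiset.replicate (Multiset.card p.1 / 2) (2 * mn p), 0))
  else tog (mn p) p

def P2 (p : Multiset ℕ × Multiset ℕ) : Prop :=
  if mn p = Mx p then 2 ∣ mn p else mn p ∈ p.2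

section iota2

/-- in the single-size even case, all the data -/
lemma even_case_data (hα : 2 ≤ α) (hp : p ∈ XS n α) (h2 : Mx p ∉ p.2) (h1 : mn p = Mx p) (he : 2 ∣ mn p) :
    iota2 p = (Multiset.replicate (2 * Multiset.card p.1) (mn p / 2), 0) ∧
    ¬ 2 ∣ (mn p / 2) ∧ Gd α (mn p / 2) ∧
    (2 * Multiset.card p.1) * (mn p / 2) = 4*n+2 := by
  obtain ⟨hstr, hsum, hpos, hGd⟩ := single_structure hp h1 h2
  obtain ⟨e, hde⟩ := he
  have hhalf : mn p / 2 = e := by omega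
  have hodd : ¬ 2 ∣ e := by
    intro ⟨f, hf⟩
    have h4 : (4:ℕ) ∣ 4*n+2 := ⟨Multiset.card p.1 * f, by rw [← hsum, hde, hf]; ring⟩
    omega
  refine ⟨by rw [iota2, if_pos h1, if_pos ⟨e, hde⟩], by rw [hhalf]; exact hodd, ?_, ?_⟩
  · rw [hhalf]
    obtain ⟨hpos', h2a, h3⟩ := hGd
    refine ⟨by omega, ?_, ?_⟩
    · intro h
      exact hodd (dvd_trans (dvd_pow_self 2 (by omega : α ≠ 0)) h)
    · intro h
      exact h3 (by rw [hde]; exact Dvd.dvd.mul_left h 2)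
  · rw [hhalf, ← hsum, hde]; ring

/-- in the single-size odd case, all the data -/
lemma odd_case_data (hα : 2 ≤ α) (hp : p ∈ XS n α) (h2 : Mx p ∉ p.2) (h1 : mn p = Mx p) (ho : ¬ 2 ∣ mn p) :
    iota2 p = (Multiset.replicate (Multiset.card p.1 / 2) (2 * mn p), 0) ∧
    2 ∣ Multiset.card p.1 ∧ 0 < Multiset.card p.1 / 2 ∧ Gd α (2 * mn p) ∧
    (Multiset.card p.1 / 2) * (2 * mn p) = 4*n+2 := by
  obtain ⟨hstr, hsum, hpos, hGd⟩ := single_structure hp h1 h2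
  have hk2 : 2 ∣ Multiset.card p.1 := by
    have h2d : (2:ℕ) ∣ Multiset.card p.1 * mn p := by rw [hsum]; omega
    rcases (Nat.Prime.dvd_mul Nat.prime_two).mp h2d with h' | h'
    · exact h'
    · exact absurd h' ho
  refine ⟨by rw [iota2, if_pos h1, if_neg ho], hk2, by omega, good_double hα hGd ho, ?_⟩
  obtain ⟨j, hj⟩ := hk2
  rw [hj, ← hsum, hj]
  have : 2 * j / 2 = j := by omega
  rw [this]; ring

lemma iota2_single_mem (hα : 2 ≤ α) (hp : p ∈ XS n α) (h2 : Mx p ∉ p.2)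
    (h1 : mn p = Mx p) : iota2 p ∈ XS n α := by
  by_cases he : 2 ∣ mn p
  · obtain ⟨heq, hodd, hGd, hsum⟩ := even_case_data hα hp h2 h1 he
    rw [heq]
    obtain ⟨_, _, hpos, _⟩ := single_structure hp h1 h2
    exact repl_memXS (by omega) hGd hsum
  · obtain ⟨heq, hk2, hjpos, hGd, hsum⟩ := odd_case_data hα hp h2 h1 he
    rw [heq]
    exact repl_memXS hjpos hGd hsum

lemma iota2_mem (hα : 2 ≤ α) (hp : p ∈ XS n α) (h2 : Mx p ∉ p.2) : iota2 p ∈ XS n α := by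
  by_cases h1 : mn p = Mx p
  · exact iota2_single_mem hα hp h2 h1
  · rw [iota2, if_neg h1]
    exact tog_memXS hp (mn_mem hp)

lemma iota2_notP1 (hp : p ∈ XS n α) (h2 : Mx p ∉ p.2) : Mx (iota2 p) ∉ (iota2 p).2 := by
  by_cases h1 : mn p = Mx p
  · rw [iota2, if_pos h1]
    by_cases he : 2 ∣ mn p
    · rw [if_pos he]; simp
    · rw [if_neg he]; simp
  · rw [iota2, if_neg h1]
    rw [Mx_congr (FS_tog (mn_mem hp))]
    rw [mem_tog_ne (by omega : Mx p ≠ mn p)]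
    exact h2

lemma iota2_invol (hα : 2 ≤ α) (hp : p ∈ XS n α) (h2 : Mx p ∉ p.2) : iota2 (iota2 p) = p := by
  by_cases h1 : mn p = Mx p
  · obtain ⟨hstr, hsum, hpos, hGd⟩ := single_structure hp h1 h2
    by_cases he : 2 ∣ mn p
    · obtain ⟨heq, hodd, hGd', hsum'⟩ := even_case_data hα hp h2 h1 he
      rw [heq]
      have hK : 2 * Multiset.card p.1 ≠ 0 := by omega
      have hmn := mn_repl (K := 2 * Multiset.card p.1) (D := mn p / 2) hK
      have hMx := Mx_repl (K := 2 * Multiset.card p.1) (D := mn p / 2) hK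
      rw [iota2, hmn, hMx, if_pos rfl, if_neg hodd]
      simp only [Multiset.card_replicate]
      have e1 : 2 * Multiset.card p.1 / 2 = Multiset.card p.1 := by omega
      have e2 : 2 * (mn p / 2) = mn p := by
        obtain ⟨e, hde⟩ := he
        omega
      rw [e1, e2]
      exact hstr.symm
    · obtain ⟨heq, hk2, hjpos, hGd', hsum'⟩ := odd_case_data hα hp h2 h1 he
      rw [heq]
      have hK : Multiset.card p.1 / 2 ≠ 0 := by omega
      have hmn := mn_repl (K := Multiset.card p.1 / 2) (D := 2 * mn p) hK
      have hMx := Mx_repl (K := Multiset.card p.1 / 2) (D := 2 * mn p) hK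
      rw [iota2, hmn, hMx, if_pos rfl, if_pos (dvd_mul_right 2 (mn p))]
      simp only [Multiset.card_replicate]
      have e1 : 2 * (Multiset.card p.1 / 2) = Multiset.card p.1 := by
        obtain ⟨j, hj⟩ := hk2
        omega
      have e2 : 2 * mn p / 2 = mn p := by omega
      rw [e1, e2]
      exact hstr.symm
  · have hin : iota2 p = tog (mn p) p := by rw [iota2, if_neg h1]
    have hs := mn_mem hp
    have hFS := FS_tog (p := p) (s := mn p) hs
    have hmn := mn_congr hFS
    have hMx := Mx_congr hFS
    rw [hin, iota2, hmn, hMx, if_neg h1]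
    exact tog_tog hs hp.2.1

lemma iota2_flip (hα : 2 ≤ α) (hp : p ∈ XS n α) (h2 : Mx p ∉ p.2) : P2 (iota2 p) ↔ ¬ P2 p := by
  by_cases h1 : mn p = Mx p
  · have hPp : P2 p ↔ 2 ∣ mn p := by rw [P2, if_pos h1]
    by_cases he : 2 ∣ mn p
    · obtain ⟨heq, hodd, hGd', hsum'⟩ := even_case_data hα hp h2 h1 he
      obtain ⟨hstr, hsum, hpos, hGd⟩ := single_structure hp h1 h2
      rw [heq]
      have hK : 2 * Multiset.card p.1 ≠ 0 := by omega
      have hmn := mn_repl (K := 2 * Multiset.card p.1) (D := mn p / 2) hK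
      have hMx := Mx_repl (K := 2 * Multiset.card p.1) (D := mn p / 2) hK
      rw [P2, hmn, hMx, if_pos rfl]
      simp [hodd, hPp, he]
    · obtain ⟨heq, hk2, hjpos, hGd', hsum'⟩ := odd_case_data hα hp h2 h1 he
      rw [heq]
      have hK : Multiset.card p.1 / 2 ≠ 0 := by omega
      have hmn := mn_repl (K := Multiset.card p.1 / 2) (D := 2 * mn p) hK
      have hMx := Mx_repl (K := Multiset.card p.1 / 2) (D := 2 * mn p) hK
      rw [P2, hmn, hMx, if_pos rfl]
      simp [hPp, he]
  · have hin : iota2 p = tog (mn p) p := by rw [iota2, if_neg h1]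
    have hs := mn_mem hp
    have hFS := FS_tog (p := p) (s := mn p) hs
    have hmn := mn_congr hFS
    have hMx := Mx_congr hFS
    rw [hin, P2, hmn, hMx, if_neg h1, P2, if_neg h1]
    exact mem_tog_self hp.2.1

end iota2

/-! ### the first involution -/

noncomputable def iota1 (p : Multiset ℕ × Multiset ℕ) : Multiset ℕ × Multiset ℕ :=
  tog (Mx p) p

lemma iota1_mem (hp : p ∈ XS n α) : iota1 p ∈ XS n α :=
  tog_memXS hp (Mx_mem hp)

lemma iota1_invol (hp : p ∈ XS n α) : iota1 (iota1 p) = p := by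
  have hs := Mx_mem hp
  rw [iota1, iota1, Mx_congr (FS_tog hs)]
  exact tog_tog hs hp.2.1

lemma iota1_flip (hp : p ∈ XS n α) :
    Mx (iota1 p) ∈ (iota1 p).2 ↔ ¬ Mx p ∈ p.2 := by
  rw [iota1, Mx_congr (FS_tog (Mx_mem hp))]
  exact mem_tog_self hp.2.1

/-! ### halving machinery -/

noncomputable def flipEquiv {Z : Type*} (ι : Z → Z) (P : Z → Prop)
    (hinv : ∀ z, ι (ι z) = z) (hP : ∀ z, P (ι z) ↔ ¬ P z) :
    Z ≃ Bool × {z : Z // ¬ P z} := by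
  classical
  exact
  { toFun := fun z =>
      if h : P z then (true, ⟨ι z, by rw [hP]; exact not_not_intro h⟩)
      else (false, ⟨z, h⟩)
    invFun := fun w => if w.1 then ι w.2.1 else w.2.1
    left_inv := by
      intro z
      by_cases h : P z
      · simp only [dif_pos h, if_true]
        exact hinv z
      · simp only [dif_neg h, Bool.false_eq_true, if_false]
    right_inv := by
      rintro ⟨b, ⟨y, hy⟩⟩
      cases b
      · simp only [Bool.false_eq_true, if_false, dif_neg hy]
      · simp only [if_true, dif_pos ((hP y).mpr hy), Prod.mk.injEq, true_and]
        exact Subtype.ext (hinv y) }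

lemma card_flip {Z : Type*} (ι : Z → Z) (P : Z → Prop)
    (hinv : ∀ z, ι (ι z) = z) (hP : ∀ z, P (ι z) ↔ ¬ P z) :
    Nat.card Z = 2 * Nat.card {z : Z // ¬ P z} := by
  rw [Nat.card_congr (flipEquiv ι P hinv hP), Nat.card_prod]
  congr 1
  rw [Nat.card_eq_fintype_card]
  exact Fintype.card_bool

/-! ### main theorem -/

theorem main (n α : ℕ) (hα : 2 ≤ α) : 4 ∣ Nat.card (XS n α) := by
  classical
  have h1 : Nat.card ↥(XS n α) =
      2 * Nat.card {z : ↥(XS n α) // ¬ (Mx z.1 ∈ z.1.2)} :=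
    card_flip (Z := ↥(XS n α))
      (fun z => ⟨iota1 z.1, iota1_mem z.2⟩)
      (fun z => Mx z.1 ∈ z.1.2)
      (fun z => Subtype.ext (iota1_invol z.2))
      (fun z => iota1_flip z.2)
  have h2 : Nat.card {z : ↥(XS n α) // ¬ (Mx z.1 ∈ z.1.2)} =
      2 * Nat.card {w : {z : ↥(XS n α) // ¬ (Mx z.1 ∈ z.1.2)} // ¬ P2 w.1.1} :=
    card_flip (Z := {z : ↥(XS n α) // ¬ (Mx z.1 ∈ z.1.2)})
      (fun w => ⟨⟨iota2 w.1.1, iota2_mem hα w.1.2 w.2⟩, iota2_notP1 w.1.2 w.2⟩)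
      (fun w => P2 w.1.1)
      (fun w => Subtype.ext (Subtype.ext (by dsimp only; exact iota2_invol hα w.1.2 w.2)))
      (fun w => iota2_flip hα w.1.2 w.2)
  rw [h1, h2]
  omega

end BOP

theorem biregular_overpartition_pow2_3_4n2_mod4 (n α : ℕ) (hα : 2 ≤ α) :
    4 ∣ biregularOverpartitions (2 ^ α) 3 (4 * n + 2) := by
  have hset : {p : Multiset ℕ × Multiset ℕ |
      (∀ x ∈ p.1, 0 < x ∧ ¬ (2^α:ℕ) ∣ x ∧ ¬ (3:ℕ) ∣ x) ∧
      (∀ x ∈ p.2, 0 < x ∧ ¬ (2^α:ℕ) ∣ x ∧ ¬ (3:ℕ) ∣ x) ∧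
      p.2.Nodup ∧ p.1.sum + p.2.sum = 4*n+2} = BOP.XS n α := by
    ext p
    simp only [Set.mem_setOf_eq, BOP.XS, BOP.Gd, Multiset.mem_add, Multiset.sum_add,
      or_imp, forall_and]
    tauto
  rw [biregularOverpartitions, hset, ← Nat.card_coe_set_eq]
  exact BOP.main n α hα
end

section
/- For every integer n ≥ 0 and every integer α ≥ 2, the number of (2^α, 3)-biregular overpartitions of 8n+5 is divisible by 4, i.e. B̄_{2^α,3}(8n+5) ≡ 0 (mod 4). -/
/-- A finset has even cardinality if it carries a fixed-point-free involution. -/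
private lemma even_card_of_invol {β : Type*} [DecidableEq β] (f : β → β) :
    ∀ s : Finset β, (∀ a ∈ s, f a ∈ s) → (∀ a ∈ s, f (f a) = a) →
      (∀ a ∈ s, f a ≠ a) → Even s.card := by
  intro s
  induction s using Finset.strongInduction with
  | _ s ih =>
    intro hmem hinv hne
    rcases s.eq_empty_or_nonempty with rfl | ⟨a, ha⟩
    · simp
    · have hfa := hmem a ha
      have hane := hne a ha
      set t := s \ {a, f a} with ht
      have hsub : t ⊆ s := Finset.sdiff_subset
      have hts : t ⊂ s := by
        refine (Finset.ssubset_iff_of_subset hsub).2 ⟨a, ha, ?_⟩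
        simp [ht]
      have hmemt : ∀ b ∈ t, f b ∈ t := by
        intro b hb
        simp only [ht, Finset.mem_sdiff, Finset.mem_insert, Finset.mem_singleton] at hb ⊢
        obtain ⟨hbs, hb2⟩ := hb
        push_neg at hb2 ⊢
        refine ⟨hmem b hbs, ?_, ?_⟩
        · intro h
          exact hb2.2 ((hinv b hbs).symm.trans (by rw [h]))
        · intro h
          apply hb2.1
          have h2 := congrArg f h
          rwa [hinv b hbs, hinv a ha] at h2
      have hinvt : ∀ b ∈ t, f (f b) = b := fun b hb => hinv b (hsub hb)
      have hnet : ∀ b ∈ t, f b ≠ b := fun b hb => hne b (hsub hb)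
      have heven := ih t hts hmemt hinvt hnet
      have hpair : ({a, f a} : Finset β) ⊆ s := by
        intro x hx
        simp only [Finset.mem_insert, Finset.mem_singleton] at hx
        rcases hx with rfl | rfl
        · exact ha
        · exact hfa
      have hcardpair : ({a, f a} : Finset β).card = 2 := by
        rw [Finset.card_insert_of_notMem (Finset.notMem_singleton.mpr (Ne.symm hane)),
          Finset.card_singleton]
      have hcard : s.card = t.card + 2 := by
        rw [ht, Finset.card_sdiff_of_subset hpair, hcardpair]
        have := Finset.card_le_card hpair
        omega
      rw [hcard]
      exact heven.add (by norm_num)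

/-- The fiber of overpartitions over a fixed total multiset `a`. -/
private def opFiber (a : Multiset ℕ) : Finset (Multiset ℕ × Multiset ℕ) :=
  a.toFinset.powerset.image (fun s => (a - s.val, s.val))

private lemma mem_opFiber {a : Multiset ℕ} {p : Multiset ℕ × Multiset ℕ} :
    p ∈ opFiber a ↔ p.1 + p.2 = a ∧ p.2.Nodup := by
  constructor
  · intro hp
    simp only [opFiber, Finset.mem_image, Finset.mem_powerset] at hp
    obtain ⟨s, hs, rfl⟩ := hp
    have hle : s.val ≤ a := by
      rw [Multiset.le_iff_subset s.nodup]
      intro x hx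
      exact Multiset.mem_toFinset.mp (hs hx)
    exact ⟨tsub_add_cancel_of_le hle, s.nodup⟩
  · rintro ⟨hsum, hnodup⟩
    have h2 : p.2.toFinset.val = p.2 := by
      rw [Multiset.toFinset_val, hnodup.dedup]
    refine Finset.mem_image.mpr ⟨p.2.toFinset, ?_, ?_⟩
    · rw [Finset.mem_powerset]
      refine Multiset.toFinset_subset.mpr ?_
      intro x hx
      rw [← hsum]
      exact Multiset.mem_add.mpr (Or.inr hx)
    · rw [h2, ← hsum, add_tsub_cancel_right]

private lemma card_opFiber (a : Multiset ℕ) : (opFiber a).card = 2 ^ a.toFinset.card := by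
  rw [opFiber, Finset.card_image_of_injOn, Finset.card_powerset]
  intro s _ t _ h
  exact Finset.val_injective (congrArg Prod.snd h)

/-- The one-part-size partition built from a divisor. -/
private def repPart (N k : ℕ) (hk : k ∈ N.divisors) : N.Partition where
  parts := Multiset.replicate (N / k) k
  parts_pos := fun hi => by
    rw [Multiset.eq_of_mem_replicate hi]
    exact Nat.pos_of_mem_divisors hk
  parts_sum := by
    rw [Multiset.sum_replicate, smul_eq_mul,
      Nat.div_mul_cancel (Nat.dvd_of_mem_divisors hk)]

set_option maxHeartbeats 2000000 in
theorem biregular_overpartition_pow2_3_8n5_mod4 (n α : ℕ) (hα : 2 ≤ α) :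
    4 ∣ biregularOverpartitions (2 ^ α) 3 (8 * n + 5) := by
  set N := 8 * n + 5 with hNdef
  have hN0 : N ≠ 0 := by omega
  set ℓ := 2 ^ α with hldef
  set PF : Finset (N.Partition) :=
    Finset.univ.filter (fun a => ∀ x ∈ a.parts, ¬ ℓ ∣ x ∧ ¬ (3:ℕ) ∣ x) with hPF
  set F : Finset (Multiset ℕ × Multiset ℕ) := PF.biUnion (fun a => opFiber a.parts) with hF
  have hmemF : ∀ p : Multiset ℕ × Multiset ℕ, p ∈ F ↔
      (∀ x ∈ p.1, 0 < x ∧ ¬ ℓ ∣ x ∧ ¬ (3:ℕ) ∣ x) ∧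
      (∀ x ∈ p.2, 0 < x ∧ ¬ ℓ ∣ x ∧ ¬ (3:ℕ) ∣ x) ∧
      p.2.Nodup ∧ p.1.sum + p.2.sum = N := by
    intro p
    constructor
    · intro hp
      obtain ⟨a, haPF, hpf⟩ := Finset.mem_biUnion.mp hp
      obtain ⟨hsum, hnodup⟩ := mem_opFiber.mp hpf
      have hall := (Finset.mem_filter.mp haPF).2
      have h1 : ∀ x ∈ p.1, x ∈ a.parts := by
        intro x hx; rw [← hsum]; exact Multiset.mem_add.mpr (Or.inl hx)
      have h2 : ∀ x ∈ p.2, x ∈ a.parts := by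
        intro x hx; rw [← hsum]; exact Multiset.mem_add.mpr (Or.inr hx)
      refine ⟨fun x hx => ⟨a.parts_pos (h1 x hx), hall x (h1 x hx)⟩,
        fun x hx => ⟨a.parts_pos (h2 x hx), hall x (h2 x hx)⟩, hnodup, ?_⟩
      rw [← Multiset.sum_add, hsum, a.parts_sum]
    · rintro ⟨h1, h2, hnodup, hsum⟩
      refine Finset.mem_biUnion.mpr ⟨⟨p.1 + p.2, ?_, by rwa [Multiset.sum_add]⟩, ?_, ?_⟩
      · intro i hi
        rcases Multiset.mem_add.mp hi with h | h
        · exact (h1 i h).1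
        · exact (h2 i h).1
      · refine Finset.mem_filter.mpr ⟨Finset.mem_univ _, ?_⟩
        intro x hx
        rcases Multiset.mem_add.mp hx with h | h
        · exact (h1 x h).2
        · exact (h2 x h).2
      · exact mem_opFiber.mpr ⟨rfl, hnodup⟩
  have hcount : biregularOverpartitions ℓ 3 N = F.card := by
    have hset : {p : Multiset ℕ × Multiset ℕ |
        (∀ x ∈ p.1, 0 < x ∧ ¬ ℓ ∣ x ∧ ¬ (3:ℕ) ∣ x) ∧
        (∀ x ∈ p.2, 0 < x ∧ ¬ ℓ ∣ x ∧ ¬ (3:ℕ) ∣ x) ∧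
        p.2.Nodup ∧ p.1.sum + p.2.sum = N} = (↑F : Set (Multiset ℕ × Multiset ℕ)) := by
      ext p
      rw [Set.mem_setOf_eq, Finset.mem_coe, hmemF p]
    unfold biregularOverpartitions
    rw [hset, Set.ncard_coe_finset]
  have hdisj : ∀ a ∈ PF, ∀ b ∈ PF, a ≠ b → Disjoint (opFiber a.parts) (opFiber b.parts) := by
    intro a _ b _ hab
    rw [Finset.disjoint_left]
    intro p hpa hpb
    exact hab (Nat.Partition.ext ((mem_opFiber.mp hpa).1.symm.trans (mem_opFiber.mp hpb).1))
  have hcard : F.card = ∑ a ∈ PF, 2 ^ a.parts.toFinset.card := by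
    rw [hF, Finset.card_biUnion hdisj]
    exact Finset.sum_congr rfl fun a _ => card_opFiber a.parts
  have hpos : ∀ a ∈ PF, a.parts.toFinset.card ≠ 0 := by
    intro a _
    simp only [ne_eq, Finset.card_eq_zero, Multiset.toFinset_eq_empty]
    intro h
    have := a.parts_sum
    rw [h] at this
    simp only [Multiset.sum_zero] at this
    omega
  set PF₁ : Finset (N.Partition) := PF.filter (fun a => a.parts.toFinset.card = 1) with hPF₁
  have hsplit : ∑ a ∈ PF, 2 ^ a.parts.toFinset.card =
      (∑ a ∈ PF₁, 2 ^ a.parts.toFinset.card) +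
      ∑ a ∈ PF.filter (fun a => ¬ a.parts.toFinset.card = 1), 2 ^ a.parts.toFinset.card :=
    (Finset.sum_filter_add_sum_filter_not PF _ _).symm
  have hdvd2 : 4 ∣ ∑ a ∈ PF.filter (fun a => ¬ a.parts.toFinset.card = 1),
      2 ^ a.parts.toFinset.card := by
    refine Finset.dvd_sum ?_
    intro a ha
    obtain ⟨haPF, hane⟩ := Finset.mem_filter.mp ha
    have h2le : 2 ≤ a.parts.toFinset.card := by
      have := hpos a haPF
      omega
    calc (4:ℕ) = 2 ^ 2 := by norm_num
      _ ∣ 2 ^ a.parts.toFinset.card := pow_dvd_pow 2 h2le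
  have hsum1 : ∑ a ∈ PF₁, 2 ^ a.parts.toFinset.card = 2 * PF₁.card := by
    rw [Finset.sum_congr rfl (fun a ha => by
      rw [(Finset.mem_filter.mp ha).2, pow_one]), Finset.sum_const, smul_eq_mul, mul_comm]
  set D : Finset ℕ := N.divisors.filter (fun k => ¬ ℓ ∣ k ∧ ¬ (3:ℕ) ∣ k) with hD
  have hbij : PF₁.card = D.card := by
    refine Finset.card_bij' (fun a _ => a.parts.toFinset.sum id)
      (fun k hk => repPart N k (Finset.mem_filter.mp hk).1) ?_ ?_ ?_ ?_
    · intro a ha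
      obtain ⟨haPF, hcard1⟩ := Finset.mem_filter.mp ha
      obtain ⟨k, hk⟩ := Finset.card_eq_one.mp hcard1
      obtain ⟨hc0, hrep⟩ := (Multiset.toFinset_eq_singleton_iff a.parts k).mp hk
      have hkmem : k ∈ a.parts := by
        rw [← Multiset.mem_toFinset, hk]; exact Finset.mem_singleton_self k
      have hsum : Multiset.card a.parts * k = N := by
        have h := a.parts_sum
        rw [hrep, Multiset.nsmul_singleton, Multiset.sum_replicate, smul_eq_mul] at h
        exact h
      have hkdvd : k ∣ N := Dvd.intro_left _ hsum
      have hallowed := (Finset.mem_filter.mp haPF).2 k hkmem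
      show a.parts.toFinset.sum id ∈ D
      rw [hk]
      simp only [Finset.sum_singleton, id_eq]
      exact Finset.mem_filter.mpr ⟨Nat.mem_divisors.mpr ⟨hkdvd, hN0⟩, hallowed⟩
    · intro k hk
      obtain ⟨hkdiv, hallowed⟩ := Finset.mem_filter.mp hk
      have hkdvd := Nat.dvd_of_mem_divisors hkdiv
      have hq0 : N / k ≠ 0 := by
        have := Nat.div_mul_cancel hkdvd
        intro h; rw [h] at this; omega
      have htf : (repPart N k hkdiv).parts.toFinset = {k} := by
        show (Multiset.replicate (N / k) k).toFinset = {k}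
        rw [Multiset.toFinset_replicate, if_neg hq0]
      refine Finset.mem_filter.mpr ⟨Finset.mem_filter.mpr ⟨Finset.mem_univ _, ?_⟩, ?_⟩
      · intro x hx
        have hx' : x ∈ Multiset.replicate (N / k) k := hx
        rw [Multiset.eq_of_mem_replicate hx']
        exact hallowed
      · rw [htf, Finset.card_singleton]
    · intro a ha
      obtain ⟨haPF, hcard1⟩ := Finset.mem_filter.mp ha
      obtain ⟨k, hk⟩ := Finset.card_eq_one.mp hcard1
      obtain ⟨hc0, hrep⟩ := (Multiset.toFinset_eq_singleton_iff a.parts k).mp hk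
      have hsum : Multiset.card a.parts * k = N := by
        have h := a.parts_sum
        rw [hrep, Multiset.nsmul_singleton, Multiset.sum_replicate, smul_eq_mul] at h
        exact h
      have hk0 : 0 < k := a.parts_pos (by
        rw [← Multiset.mem_toFinset, hk]; exact Finset.mem_singleton_self k)
      have hNk : N / k = Multiset.card a.parts :=
        Nat.div_eq_of_eq_mul_left hk0 hsum.symm
      have hik : a.parts.toFinset.sum id = k := by
        rw [hk, Finset.sum_singleton, id_eq]
      have hparts : a.parts = Multiset.replicate (Multiset.card a.parts) k := by
        conv_lhs => rw [hrep]
        rw [Multiset.nsmul_singleton]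
      refine Nat.Partition.ext ?_
      show Multiset.replicate (N / (a.parts.toFinset.sum id)) (a.parts.toFinset.sum id)
        = a.parts
      rw [hik, hNk, ← hparts]
    · intro k hk
      obtain ⟨hkdiv, _⟩ := Finset.mem_filter.mp hk
      have hkdvd := Nat.dvd_of_mem_divisors hkdiv
      have hq0 : N / k ≠ 0 := by
        have := Nat.div_mul_cancel hkdvd
        intro h; rw [h] at this; omega
      show (Multiset.replicate (N / k) k).toFinset.sum id = k
      rw [Multiset.toFinset_replicate, if_neg hq0, Finset.sum_singleton, id_eq]
  -- D has even cardinality via the involution k ↦ m / k, with m = ord_compl[3] N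
  set m : ℕ := N / 3 ^ (N.factorization 3) with hm
  have hmdvd : m ∣ N := Nat.ordCompl_dvd N 3
  have hm0 : m ≠ 0 := fun h => hN0 (Nat.eq_zero_of_zero_dvd (h ▸ hmdvd))
  have hmodd : m % 2 = 1 := by
    have h2 : ¬ (2:ℕ) ∣ m := fun h => by
      have := h.trans hmdvd
      omega
    omega
  have hm3 : ¬ (3:ℕ) ∣ m := Nat.not_dvd_ordCompl (by norm_num) hN0
  have hm8 : m % 8 ≠ 1 := by
    intro h1
    have hNfac : 3 ^ (N.factorization 3) * m = N := Nat.ordProj_mul_ordCompl_eq_self N 3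
    have h38 : 3 ^ (N.factorization 3) % 8 = 1 ∨ 3 ^ (N.factorization 3) % 8 = 3 := by
      induction (N.factorization 3) with
      | zero => left; norm_num
      | succ v ih =>
        rw [pow_succ, Nat.mul_mod]
        rcases ih with h | h <;> rw [h] <;> norm_num
    have hmm := Nat.mul_mod (3 ^ (N.factorization 3)) m 8
    rw [hNfac, h1] at hmm
    rcases h38 with h | h <;> rw [h] at hmm <;> norm_num at hmm <;> omega
  have hdvdm : ∀ k ∈ D, k ∣ m := by
    intro k hk
    obtain ⟨hkdiv, _, hk3⟩ := Finset.mem_filter.mp hk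
    have hkdvd := Nat.dvd_of_mem_divisors hkdiv
    have hcop3 : Nat.Coprime 3 k := (Nat.Prime.coprime_iff_not_dvd (by norm_num)).mpr hk3
    have hcop : Nat.Coprime k (3 ^ (N.factorization 3)) := (hcop3.pow_left _).symm
    refine hcop.dvd_of_dvd_mul_right ?_
    rw [mul_comm, Nat.ordProj_mul_ordCompl_eq_self N 3]
    exact hkdvd
  have heven : Even D.card := by
    refine even_card_of_invol (fun k => m / k) D ?_ ?_ ?_
    · intro k hk
      obtain ⟨hkdiv, hkl, hk3⟩ := Finset.mem_filter.mp hk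
      have hkm := hdvdm k hk
      have hmk_dvd : m / k ∣ m := Nat.div_dvd_of_dvd hkm
      refine Finset.mem_filter.mpr ⟨Nat.mem_divisors.mpr ⟨hmk_dvd.trans hmdvd, hN0⟩, ?_, ?_⟩
      · intro hdl
        have h2l : (2:ℕ) ∣ ℓ := dvd_pow_self 2 (by omega : α ≠ 0)
        have h2m : (2:ℕ) ∣ m := (h2l.trans hdl).trans hmk_dvd
        omega
      · intro h3
        exact hm3 (h3.trans hmk_dvd)
    · intro k hk
      exact Nat.div_div_self (hdvdm k hk) hm0
    · intro k hk hfix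
      have hkm := hdvdm k hk
      have hfix' : m / k = k := hfix
      have hmk : m = k * k := by
        have h := Nat.div_mul_cancel hkm
        rw [hfix'] at h
        omega
      have hkodd : k % 2 = 1 := by
        have h2 : ¬ (2:ℕ) ∣ k := fun h => by
          have := h.trans hkm
          omega
        omega
      set t := k / 2 with htk
      have hkt : k = 2 * t + 1 := by omega
      obtain ⟨u, hu⟩ := Nat.even_mul_succ_self t
      have hkk : k * k = 4 * (t * (t + 1)) + 1 := by
        rw [hkt]
        ring
      apply hm8
      omega
  -- put everything together
  obtain ⟨w, hw⟩ := heven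
  rw [hcount, hcard, hsplit, hsum1, hbij, hw]
  exact Nat.dvd_add ⟨w, by ring⟩ hdvd2
end

section
/- Let n ≥ 0, β ≥ 2 and α ≥ 0 be integers, and let i ∈ {1, 2}. Then the number of (2^{2α+1}, 3^β)-biregular overpartitions of 9n+3i is divisible by 4, i.e. B̄_{2^{2α+1},3^β}(9n+3i) ≡ 0 (mod 4). -/
open Finset

private lemma finset_val_le {ν : Multiset ℕ} {t : Finset ℕ} (h : t ⊆ ν.toFinset) :
    (t.val : Multiset ℕ) ≤ ν := by
  rw [Multiset.le_iff_count]
  intro x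
  by_cases hx : x ∈ t
  · have h1 : Multiset.count x t.val = 1 := Multiset.count_eq_one_of_mem t.nodup hx
    have h2 : x ∈ ν := Multiset.mem_toFinset.mp (h hx)
    rw [h1]
    exact Multiset.one_le_count_iff_mem.mpr h2
  · have : x ∉ t.val := hx
    simp [Multiset.count_eq_zero_of_notMem this]

/-- The key counting identity: the number of biregular overpartitions of `N` equals the sum
over ordinary partitions of `N` into allowed parts of `2 ^ (number of distinct parts)`. -/
private lemma biregular_eq_sum (l1 l2 N : ℕ) :
    biregularOverpartitions l1 l2 N =
      ∑ ν ∈ (Finset.univ.image (Nat.Partition.parts (n := N))).filter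
          (fun ν => ∀ x ∈ ν, ¬ l1 ∣ x ∧ ¬ l2 ∣ x),
        2 ^ ν.toFinset.card := by
  classical
  set Pf : Finset (Multiset ℕ) :=
    (Finset.univ.image (Nat.Partition.parts (n := N))).filter
      (fun ν => ∀ x ∈ ν, ¬ l1 ∣ x ∧ ¬ l2 ∣ x) with hPf
  set F : Finset (Multiset ℕ × Multiset ℕ) :=
    Pf.biUnion (fun ν => ν.toFinset.powerset.image (fun t => (ν - t.val, t.val))) with hFdef
  have hmemPf : ∀ ν ∈ Pf, (∀ x ∈ ν, 0 < x ∧ ¬ l1 ∣ x ∧ ¬ l2 ∣ x) ∧ ν.sum = N := by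
    intro ν hν
    rw [hPf, Finset.mem_filter, Finset.mem_image] at hν
    obtain ⟨⟨pa, _, hpa⟩, hall⟩ := hν
    refine ⟨fun x hx => ⟨?_, hall x hx⟩, ?_⟩
    · subst hpa; exact pa.parts_pos hx
    · subst hpa; exact pa.parts_sum
  have hset : {p : Multiset ℕ × Multiset ℕ |
      (∀ x ∈ p.1, 0 < x ∧ ¬ l1 ∣ x ∧ ¬ l2 ∣ x) ∧
      (∀ x ∈ p.2, 0 < x ∧ ¬ l1 ∣ x ∧ ¬ l2 ∣ x) ∧
      p.2.Nodup ∧ p.1.sum + p.2.sum = N} = ↑F := by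
    ext p
    simp only [Set.mem_setOf_eq, Finset.coe_biUnion, Set.mem_iUnion, Finset.mem_coe,
      Finset.mem_image, Finset.mem_powerset, hFdef, Finset.mem_biUnion]
    constructor
    · rintro ⟨h1, h2, hnd, hsum⟩
      refine ⟨p.1 + p.2, ?_, p.2.toFinset, ?_, ?_⟩
      · rw [hPf, Finset.mem_filter, Finset.mem_image]
        constructor
        · refine ⟨⟨p.1 + p.2, ?_, ?_⟩, Finset.mem_univ _, rfl⟩
          · intro x hx
            rcases Multiset.mem_add.mp hx with h | h
            · exact (h1 x h).1
            · exact (h2 x h).1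
          · rw [Multiset.sum_add]; exact hsum
        · intro x hx
          rcases Multiset.mem_add.mp hx with h | h
          · exact (h1 x h).2
          · exact (h2 x h).2
      · intro x hx
        rw [Multiset.mem_toFinset] at hx ⊢
        exact Multiset.mem_add.mpr (Or.inr hx)
      · have hval : (p.2.toFinset.val : Multiset ℕ) = p.2 := by
          rw [Multiset.toFinset_val, Multiset.dedup_eq_self.mpr hnd]
        rw [hval]
        have : p.1 + p.2 - p.2 = p.1 := by
          rw [add_tsub_cancel_right]
        rw [this]
    · rintro ⟨ν, hν, t, ht, rfl⟩
      obtain ⟨hall, hsum⟩ := hmemPf ν hν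
      have hle : (t.val : Multiset ℕ) ≤ ν := finset_val_le ht
      refine ⟨?_, ?_, t.nodup, ?_⟩
      · intro x hx
        exact hall x (Multiset.mem_of_le (Multiset.sub_le_self _ _) hx)
      · intro x hx
        exact hall x (Multiset.mem_of_le hle hx)
      · show (ν - t.val).sum + t.val.sum = N
        rw [← Multiset.sum_add, tsub_add_cancel_of_le hle, hsum]
  rw [biregularOverpartitions, hset, Set.ncard_coe_finset, hFdef]
  rw [Finset.card_biUnion]
  · apply Finset.sum_congr rfl
    intro ν _
    rw [Finset.card_image_of_injOn, Finset.card_powerset]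
    intro t _ t' _ h
    have hsnd : t.val = t'.val := congrArg Prod.snd h
    exact Finset.val_injective hsnd
  · intro ν hν ν' hν' hne
    rw [Function.onFun, Finset.disjoint_left]
    rintro p hp hp'
    rw [Finset.mem_image] at hp hp'
    obtain ⟨t, ht, hpt⟩ := hp
    obtain ⟨t', ht', hpt'⟩ := hp'
    rw [Finset.mem_powerset] at ht ht'
    have e1 : p.1 + p.2 = ν := by
      rw [← hpt]; exact tsub_add_cancel_of_le (finset_val_le ht)
    have e2 : p.1 + p.2 = ν' := by
      rw [← hpt']; exact tsub_add_cancel_of_le (finset_val_le ht')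
    exact hne (e1 ▸ e2)

/-- Evenness of the relevant divisor count. -/
private lemma divisors_filter_even (l1 m β : ℕ) (h3m : ¬ 3 ∣ m) (hm : m ≠ 0)
    (hβ : 2 ≤ β) (hcop : Nat.Coprime l1 3) :
    2 ∣ ((3 * m).divisors.filter (fun k => ¬ l1 ∣ k ∧ ¬ (3:ℕ) ^ β ∣ k)).card := by
  classical
  set N := 3 * m with hN
  have hNne : N ≠ 0 := by positivity
  set D := N.divisors.filter (fun k => ¬ l1 ∣ k ∧ ¬ (3:ℕ) ^ β ∣ k) with hD
  have hsplit : (D.filter (fun k => (3:ℕ) ∣ k)).card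
      + (D.filter (fun k => ¬ (3:ℕ) ∣ k)).card = D.card :=
    Finset.card_filter_add_card_filter_not _
  have hcard : (D.filter (fun k => (3:ℕ) ∣ k)).card
      = (D.filter (fun k => ¬ (3:ℕ) ∣ k)).card := by
    refine Finset.card_bij' (fun k _ => k / 3) (fun k _ => 3 * k) ?_ ?_ ?_ ?_
    · intro k hk
      simp only [Finset.mem_filter, hD, Nat.mem_divisors] at hk
      obtain ⟨⟨⟨hkN, _⟩, hl1, h3β⟩, h3k⟩ := hk
      obtain ⟨k', rfl⟩ := h3k
      show 3 * k' / 3 ∈ Finset.filter (fun k => ¬ (3:ℕ) ∣ k) D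
      rw [Nat.mul_div_cancel_left _ (by norm_num : (0:ℕ) < 3)]
      simp only [Finset.mem_filter, hD, Nat.mem_divisors]
      refine ⟨⟨⟨dvd_trans ⟨3, by ring⟩ hkN, hNne⟩, ?_, ?_⟩, ?_⟩
      · exact fun h => hl1 (dvd_trans h ⟨3, by ring⟩)
      · exact fun h => h3β (dvd_trans h ⟨3, by ring⟩)
      · intro h3k'
        have h9 : (9:ℕ) ∣ N := dvd_trans (by obtain ⟨c, rfl⟩ := h3k'; exact ⟨c, by ring⟩) hkN
        obtain ⟨c, hc⟩ := h9
        apply h3m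
        exact ⟨c, by omega⟩
    · intro k hk
      simp only [Finset.mem_filter, hD, Nat.mem_divisors] at hk
      obtain ⟨⟨⟨hkN, _⟩, hl1, h3β⟩, h3k⟩ := hk
      show 3 * k ∈ Finset.filter (fun k => (3:ℕ) ∣ k) D
      simp only [Finset.mem_filter, hD, Nat.mem_divisors]
      have hck : Nat.Coprime k 3 :=
        ((Nat.Prime.coprime_iff_not_dvd Nat.prime_three).mpr h3k).symm
      have hkm : k ∣ m := hck.dvd_of_dvd_mul_left (show k ∣ 3 * m from hN ▸ hkN)
      refine ⟨⟨⟨mul_dvd_mul_left 3 hkm, hNne⟩, ?_, ?_⟩, ⟨k, rfl⟩⟩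
      · intro h
        exact hl1 (hcop.dvd_of_dvd_mul_left h)
      · intro h
        have h3e : (3:ℕ) ^ β = 3 * 3 ^ (β - 1) := by
          rw [← pow_succ']
          congr 1
          omega
        rw [h3e] at h
        exact h3k (dvd_trans (dvd_pow_self 3 (by omega))
          ((mul_dvd_mul_iff_left (by norm_num : (3:ℕ) ≠ 0)).mp h))
    · intro k hk
      rw [Finset.mem_filter] at hk
      obtain ⟨_, h3k⟩ := hk
      obtain ⟨k', rfl⟩ := h3k
      show 3 * (3 * k' / 3) = 3 * k'
      rw [Nat.mul_div_cancel_left _ (by norm_num : (0:ℕ) < 3)]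
    · intro k _
      show 3 * k / 3 = k
      rw [Nat.mul_div_cancel_left _ (by norm_num : (0:ℕ) < 3)]
  omega

theorem biregular_overpartition_pow2odd_pow3_9n3i_mod4 (n α β i : ℕ) (hβ : 2 ≤ β)
    (hi : i = 1 ∨ i = 2) :
    4 ∣ biregularOverpartitions (2 ^ (2 * α + 1)) (3 ^ β) (9 * n + 3 * i) := by
  classical
  set l1 := 2 ^ (2 * α + 1) with hl1
  set N := 9 * n + 3 * i with hNdef
  set m := 3 * n + i with hmdef
  have hNm : N = 3 * m := by omega
  have h3m : ¬ 3 ∣ m := by omega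
  have hmne : m ≠ 0 := by omega
  have hNne : N ≠ 0 := by omega
  rw [biregular_eq_sum]
  set Pf : Finset (Multiset ℕ) :=
    (Finset.univ.image (Nat.Partition.parts (n := N))).filter
      (fun ν => ∀ x ∈ ν, ¬ l1 ∣ x ∧ ¬ (3:ℕ) ^ β ∣ x) with hPf
  have hmemPf : ∀ ν ∈ Pf, (∀ x ∈ ν, 0 < x ∧ ¬ l1 ∣ x ∧ ¬ (3:ℕ) ^ β ∣ x) ∧ ν.sum = N := by
    intro ν hν
    rw [hPf, Finset.mem_filter, Finset.mem_image] at hν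
    obtain ⟨⟨pa, _, hpa⟩, hall⟩ := hν
    refine ⟨fun x hx => ⟨?_, hall x hx⟩, ?_⟩
    · subst hpa; exact pa.parts_pos hx
    · subst hpa; exact pa.parts_sum
  have hsplit : ∑ ν ∈ Pf, 2 ^ ν.toFinset.card
      = ∑ ν ∈ Pf.filter (fun ν => ν.toFinset.card = 1), 2 ^ ν.toFinset.card
        + ∑ ν ∈ Pf.filter (fun ν => ¬ ν.toFinset.card = 1), 2 ^ ν.toFinset.card :=
    (Finset.sum_filter_add_sum_filter_not _ _ _).symm
  rw [hsplit]
  have hdvd2 : 4 ∣ ∑ ν ∈ Pf.filter (fun ν => ¬ ν.toFinset.card = 1), 2 ^ ν.toFinset.card := by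
    apply Finset.dvd_sum
    intro ν hν
    rw [Finset.mem_filter] at hν
    obtain ⟨hνPf, hc⟩ := hν
    have hνne : ν ≠ 0 := by
      intro h
      have := (hmemPf ν hνPf).2
      rw [h] at this
      simp at this
      omega
    have hc0 : ν.toFinset.card ≠ 0 := by
      rw [Ne, Finset.card_eq_zero, Multiset.toFinset_eq_empty]
      exact hνne
    have h2le : 2 ≤ ν.toFinset.card := by omega
    calc (4:ℕ) = 2 ^ 2 := by norm_num
    _ ∣ 2 ^ ν.toFinset.card := pow_dvd_pow 2 h2le
  have hone : ∑ ν ∈ Pf.filter (fun ν => ν.toFinset.card = 1), 2 ^ ν.toFinset.card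
      = 2 * (Pf.filter (fun ν => ν.toFinset.card = 1)).card := by
    have hconst : ∀ ν ∈ Pf.filter (fun ν => ν.toFinset.card = 1),
        2 ^ ν.toFinset.card = 2 := by
      intro ν hν
      rw [Finset.mem_filter] at hν
      rw [hν.2, pow_one]
    rw [Finset.sum_congr rfl hconst, Finset.sum_const, smul_eq_mul, mul_comm]
  rw [hone]
  -- now biject the single-part-size partitions with allowed divisors
  have hbij : (Pf.filter (fun ν => ν.toFinset.card = 1)).card
      = (N.divisors.filter (fun k => ¬ l1 ∣ k ∧ ¬ (3:ℕ) ^ β ∣ k)).card := by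
    apply Finset.card_bij' (fun ν _ => ν.sum / Multiset.card ν)
      (fun k _ => Multiset.replicate (N / k) k)
    · intro ν hν
      rw [Finset.mem_filter] at hν
      obtain ⟨hνPf, hc⟩ := hν
      obtain ⟨hall, hsum⟩ := hmemPf ν hνPf
      obtain ⟨k, hk⟩ := Finset.card_eq_one.mp hc
      have hrep : ν = Multiset.replicate (Multiset.card ν) k := by
        apply Multiset.eq_replicate_of_mem
        intro b hb
        have : b ∈ ν.toFinset := Multiset.mem_toFinset.mpr hb
        rw [hk, Finset.mem_singleton] at this
        exact this
      have hkν : k ∈ ν := by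
        have : k ∈ ν.toFinset := by rw [hk]; exact Finset.mem_singleton_self k
        exact Multiset.mem_toFinset.mp this
      have hcne : Multiset.card ν ≠ 0 := by
        intro h
        rw [Multiset.card_eq_zero] at h
        rw [h] at hkν
        simp at hkν
      have hsum' : ν.sum = Multiset.card ν * k := by
        conv_lhs => rw [hrep]
        rw [Multiset.sum_replicate, smul_eq_mul]
      have hq : ν.sum / Multiset.card ν = k := by
        rw [hsum', Nat.mul_div_cancel_left _ (Nat.pos_of_ne_zero hcne)]
      rw [hq, Finset.mem_filter, Nat.mem_divisors]
      exact ⟨⟨⟨Multiset.card ν, by rw [← hsum, hsum', mul_comm]⟩, hNne⟩, (hall k hkν).2⟩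
    · intro k hk
      rw [Finset.mem_filter, Nat.mem_divisors] at hk
      obtain ⟨⟨hkN, _⟩, hkl1, hk3⟩ := hk
      have hkpos : 0 < k := Nat.pos_of_dvd_of_pos hkN (Nat.pos_of_ne_zero hNne)
      have hqpos : 0 < N / k := Nat.div_pos (Nat.le_of_dvd (Nat.pos_of_ne_zero hNne) hkN) hkpos
      rw [Finset.mem_filter]
      constructor
      · rw [hPf, Finset.mem_filter, Finset.mem_image]
        constructor
        · refine ⟨⟨Multiset.replicate (N / k) k, ?_, ?_⟩, Finset.mem_univ _, rfl⟩
          · intro x hx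
            rw [Multiset.eq_of_mem_replicate hx]
            exact hkpos
          · rw [Multiset.sum_replicate, smul_eq_mul, Nat.div_mul_cancel hkN]
        · intro x hx
          rw [Multiset.eq_of_mem_replicate hx]
          exact ⟨hkl1, hk3⟩
      · rw [Multiset.toFinset_replicate, if_neg (by omega)]
        exact Finset.card_singleton k
    · intro ν hν
      rw [Finset.mem_filter] at hν
      obtain ⟨hνPf, hc⟩ := hν
      obtain ⟨hall, hsum⟩ := hmemPf ν hνPf
      obtain ⟨k, hk⟩ := Finset.card_eq_one.mp hc
      have hrep : ν = Multiset.replicate (Multiset.card ν) k := by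
        apply Multiset.eq_replicate_of_mem
        intro b hb
        have : b ∈ ν.toFinset := Multiset.mem_toFinset.mpr hb
        rw [hk, Finset.mem_singleton] at this
        exact this
      have hkν : k ∈ ν := by
        have : k ∈ ν.toFinset := by rw [hk]; exact Finset.mem_singleton_self k
        exact Multiset.mem_toFinset.mp this
      have hcne : Multiset.card ν ≠ 0 := by
        intro h
        rw [Multiset.card_eq_zero] at h
        rw [h] at hkν
        simp at hkν
      have hkpos : 0 < k := (hall k hkν).1
      have hsum' : ν.sum = Multiset.card ν * k := by
        conv_lhs => rw [hrep]
        rw [Multiset.sum_replicate, smul_eq_mul]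
      have hq : ν.sum / Multiset.card ν = k := by
        rw [hsum', Nat.mul_div_cancel_left _ (Nat.pos_of_ne_zero hcne)]
      rw [hq]
      have hNk : N / k = Multiset.card ν := by
        rw [← hsum, hsum', Nat.mul_div_cancel _ hkpos]
      rw [hNk]
      exact hrep.symm
    · intro k hk
      rw [Finset.mem_filter, Nat.mem_divisors] at hk
      obtain ⟨⟨hkN, _⟩, _, _⟩ := hk
      have hkpos : 0 < k := Nat.pos_of_dvd_of_pos hkN (Nat.pos_of_ne_zero hNne)
      have hqpos : 0 < N / k := Nat.div_pos (Nat.le_of_dvd (Nat.pos_of_ne_zero hNne) hkN) hkpos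
      rw [Multiset.sum_replicate, Multiset.card_replicate, smul_eq_mul,
        Nat.mul_div_cancel_left _ hqpos]
  rw [hbij]
  have hcop : Nat.Coprime l1 3 := by
    rw [hl1]
    exact Nat.Coprime.pow_left _ (by norm_num)
  have heven := divisors_filter_even l1 m β h3m hmne hβ hcop
  rw [← hNm] at heven
  obtain ⟨c, hc⟩ := heven
  rw [hc]
  omega
end

section
/- Let α ≥ 2, β ≥ 1 and n ≥ 0 be integers. If either (α is odd and β is even) or (α and β are both even), then the number of (2^α, 3^β)-biregular overpartitions of 12n+3 is divisible by 8, i.e. B̄_{2^α,3^β}(12n+3) ≡ 0 (mod 8). -/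
/-- divisors of `m` not divisible by `2^α` nor `3^β`. -/
def BOdivS (α β m : ℕ) : Finset ℕ :=
  m.divisors.filter (fun d => ¬ 2^α ∣ d ∧ ¬ 3^β ∣ d)

/-- the mod-4 character as an integer-valued function. -/
def BOchi (d : ℕ) : ℤ := if d % 4 = 1 then 1 else if d % 4 = 3 then -1 else 0

lemma BOchi_mul (a b : ℕ) : BOchi (a * b) = BOchi a * BOchi b := by
  unfold BOchi
  have h : (a * b) % 4 = (a % 4) * (b % 4) % 4 := Nat.mul_mod a b 4
  rcases (by omega : a % 4 = 0 ∨ a % 4 = 1 ∨ a % 4 = 2 ∨ a % 4 = 3) with h1|h1|h1|h1 <;>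
    rcases (by omega : b % 4 = 0 ∨ b % 4 = 1 ∨ b % 4 = 2 ∨ b % 4 = 3) with h2|h2|h2|h2 <;>
    rw [h, h1, h2] <;> norm_num

lemma BOchi_odd {d : ℕ} (hd : d % 2 = 1) : BOchi d = 1 ∨ BOchi d = -1 := by
  unfold BOchi
  rcases (by omega : d % 4 = 1 ∨ d % 4 = 3) with h|h <;> simp [h]

/-- sum of χ over divisors of m ≡ 3 (mod 4) vanishes. -/
lemma BOchi_sum_divisors {m : ℕ} (hm : m % 4 = 3) :
    ∑ d ∈ m.divisors, BOchi d = 0 := by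
  have hm0 : m ≠ 0 := by omega
  have h2 : ∑ d ∈ m.divisors, BOchi (m / d) = ∑ d ∈ m.divisors, BOchi d :=
    Nat.sum_div_divisors m BOchi
  have key : ∀ d ∈ m.divisors, BOchi (m / d) = - BOchi d := by
    intro d hd
    have hd1 : d ∣ m := (Nat.mem_divisors.mp hd).1
    have hmd : d * (m / d) = m := Nat.mul_div_cancel' hd1
    have hmul : BOchi d * BOchi (m / d) = BOchi m := by rw [← BOchi_mul, hmd]
    have hcm : BOchi m = -1 := by unfold BOchi; rw [hm]; norm_num
    have hodd : d % 2 = 1 := by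
      have : ¬ (2 ∣ d) := fun h2 => absurd (h2.trans hd1) (by omega)
      omega
    rcases BOchi_odd hodd with h | h <;> rw [h] at hmul ⊢ <;> linarith
  have h3 : ∑ d ∈ m.divisors, BOchi (m / d) = - ∑ d ∈ m.divisors, BOchi d := by
    rw [← Finset.sum_neg_distrib]
    exact Finset.sum_congr rfl key
  have := h2.symm.trans h3
  linarith

/-- non-squares have an even number of divisors. -/
lemma BOeven_card_divisors {m : ℕ} (hm : m ≠ 0) (h : ¬ IsSquare m) :
    Even m.divisors.card := by
  have hz : (m.divisors.card : ZMod 2) = 0 := by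
    rw [Finset.card_eq_sum_ones, Nat.cast_sum]
    refine Finset.sum_involution (fun d _ => m / d) (fun a ha => by decide)
      (fun a ha _ => ?_) (fun a ha => ?_) (fun a ha => ?_)
    · intro hfix
      apply h
      have ha1 : a ∣ m := (Nat.mem_divisors.mp ha).1
      change m / a = a at hfix
      exact ⟨a, by rw [← Nat.mul_div_cancel' ha1, hfix]⟩
    · have ha1 : a ∣ m := (Nat.mem_divisors.mp ha).1
      exact Nat.mem_divisors.mpr ⟨Nat.div_dvd_of_dvd ha1, hm⟩
    · exact Nat.div_div_self (Nat.mem_divisors.mp ha).1 hm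
  have h2 : (2 : ℕ) ∣ m.divisors.card := by
    exact_mod_cast (ZMod.natCast_eq_zero_iff _ 2).mp hz
  exact even_iff_two_dvd.mpr h2
lemma BOpow3_mod4 {β : ℕ} (hβ : Even β) : 3 ^ β % 4 = 1 := by
  obtain ⟨k, rfl⟩ := hβ
  have h : (3:ℕ) ^ (k + k) = 9 ^ k := by rw [pow_add, ← mul_pow]; norm_num
  rw [h, Nat.pow_mod]
  norm_num

lemma BOsq_mod4 {k : ℕ} (h : IsSquare k) : k % 4 = 0 ∨ k % 4 = 1 := by
  obtain ⟨r, rfl⟩ := h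
  have h4 : r % 4 < 4 := Nat.mod_lt _ (by norm_num)
  have := Nat.mul_mod r r 4
  interval_cases h1 : r % 4 <;> omega

lemma BOdivS_filter_eq {α β m : ℕ} (hα : 2 ≤ α) (hm : ¬ (4 ∣ m)) :
    BOdivS α β m = m.divisors.filter (fun d => ¬ 3^β ∣ d) := by
  apply Finset.filter_congr
  intro d hd
  have hd1 : d ∣ m := (Nat.mem_divisors.mp hd).1
  have h2 : ¬ 2^α ∣ d := by
    intro h
    exact hm (((by norm_num : (4:ℕ) = 2^2) ▸ pow_dvd_pow 2 hα).trans (h.trans hd1))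
  simp [h2]

lemma BOcard_filter_pow3 {β m : ℕ} (hm : m ≠ 0) (hdvd : 3^β ∣ m) :
    (m.divisors.filter (fun d => 3^β ∣ d)).card = (m / 3^β).divisors.card := by
  have hp : (0:ℕ) < 3^β := pow_pos (by norm_num) _
  refine Finset.card_bij' (fun d _ => d / 3^β) (fun e _ => 3^β * e) ?hi ?hj ?li ?ri
  case hi =>
    intro d hd
    rw [Finset.mem_filter, Nat.mem_divisors] at hd
    obtain ⟨⟨hdm, -⟩, u, rfl⟩ := hd
    obtain ⟨v, hv⟩ := hdvd
    show 3^β * u / 3^β ∈ (m / 3^β).divisors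
    rw [Nat.mem_divisors, Nat.mul_div_cancel_left _ hp, hv, Nat.mul_div_cancel_left _ hp]
    refine ⟨(mul_dvd_mul_iff_left (by positivity : (3:ℕ)^β ≠ 0)).mp (hv ▸ hdm), ?_⟩
    intro h0; rw [h0, mul_zero] at hv; exact hm hv
  case hj =>
    intro e he
    rw [Nat.mem_divisors] at he
    rw [Finset.mem_filter, Nat.mem_divisors]
    exact ⟨⟨(mul_dvd_mul_left _ he.1).trans (by rw [Nat.mul_div_cancel' hdvd]), hm⟩,
      Dvd.intro e rfl⟩
  case li =>
    intro d hd
    rw [Finset.mem_filter] at hd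
    exact Nat.mul_div_cancel' hd.2
  case ri =>
    intro e he
    exact Nat.mul_div_cancel_left _ hp

lemma BOfilter_pow3_empty {β m : ℕ} (hdvd : ¬ 3^β ∣ m) :
    (m.divisors.filter (fun d => 3^β ∣ d)) = ∅ := by
  rw [Finset.filter_eq_empty_iff]
  intro d hd
  rw [Nat.mem_divisors] at hd
  exact fun h => hdvd (h.trans hd.1)

/-- Key parity lemma: if `m ≡ 2, 3 (mod 4)` then the restricted divisor count is even. -/
lemma BOdivS_card_even {α β m : ℕ} (hα : 2 ≤ α) (hβ : Even β)
    (hm : m % 4 = 2 ∨ m % 4 = 3) : Even (BOdivS α β m).card := by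
  have hm0 : m ≠ 0 := by omega
  have h4 : ¬ (4 ∣ m) := by omega
  rw [BOdivS_filter_eq hα h4]
  have hsplit := Finset.card_filter_add_card_filter_not
    (s := m.divisors) (p := fun d => 3^β ∣ d)
  have h1 : Even m.divisors.card := by
    apply BOeven_card_divisors hm0
    intro hsq
    rcases BOsq_mod4 hsq with h | h <;> omega
  rcases Classical.em (3^β ∣ m) with hdvd | hdvd
  · have h2 : Even (m / 3^β).divisors.card := by
      apply BOeven_card_divisors
      · intro h0
        rw [Nat.div_eq_zero_iff, or_iff_right (pow_pos (by norm_num : (0:ℕ) < 3) β).ne'] at h0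
        exact absurd (Nat.le_of_dvd (by omega) hdvd) (by omega)
      · intro hsq
        obtain ⟨q, hq⟩ := hdvd
        have hq4 : q % 4 = m % 4 := by
          have h9 : 3^β % 4 = 1 := BOpow3_mod4 hβ
          have := Nat.mul_mod (3^β) q 4
          rw [h9, ← hq] at this; omega
        rw [hq, Nat.mul_div_cancel_left _ (pow_pos (by norm_num : (0:ℕ) < 3) _)] at hsq
        rcases BOsq_mod4 hsq with h | h <;> omega
    have hc := BOcard_filter_pow3 hm0 hdvd
    rw [Nat.even_iff] at h1 h2 ⊢
    omega
  · have hc := BOfilter_pow3_empty hdvd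
    rw [hc] at hsplit
    rw [Nat.even_iff] at h1 ⊢
    simp only [Finset.card_empty] at hsplit
    omega
lemma BOchi_sum_div_divisors {m : ℕ} (hm : m % 4 = 3) :
    ∑ d ∈ m.divisors, BOchi (m / d) = 0 := by
  rw [Nat.sum_div_divisors m BOchi]
  exact BOchi_sum_divisors hm

/-- χ-sum over the restricted divisors of `N ≡ 3 (mod 4)` vanishes. -/
lemma BOdivS_chi_sum {α β N : ℕ} (hα : 2 ≤ α) (hβ : Even β) (hN : N % 4 = 3) :
    ∑ d ∈ BOdivS α β N, BOchi (N / d) = 0 := by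
  have h4 : ¬ (4 ∣ N) := by omega
  rw [BOdivS_filter_eq hα h4]
  have hsplit := Finset.sum_filter_add_sum_filter_not N.divisors
    (fun d => 3^β ∣ d) (fun d => BOchi (N / d))
  have htot : ∑ d ∈ N.divisors, BOchi (N / d) = 0 := BOchi_sum_div_divisors hN
  have hfil : ∑ d ∈ N.divisors.filter (fun d => 3^β ∣ d), BOchi (N / d) = 0 := by
    rcases Classical.em (3^β ∣ N) with hdvd | hdvd
    · have hp : (0:ℕ) < 3^β := pow_pos (by norm_num) _
      have hN0 : N ≠ 0 := by omega
      have hNq4 : (N / 3^β) % 4 = 3 := by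
        obtain ⟨q, hq⟩ := hdvd
        have h9 : 3^β % 4 = 1 := BOpow3_mod4 hβ
        have hm := Nat.mul_mod (3^β) q 4
        rw [h9, ← hq] at hm
        rw [hq, Nat.mul_div_cancel_left _ hp]
        omega
      have hre : ∑ d ∈ N.divisors.filter (fun d => 3^β ∣ d), BOchi (N / d)
          = ∑ e ∈ (N / 3^β).divisors, BOchi ((N / 3^β) / e) := by
        refine Finset.sum_bij' (fun d _ => d / 3^β) (fun e _ => 3^β * e) ?hi ?hj ?li ?ri ?hv
        case hi =>
          intro d hd
          rw [Finset.mem_filter, Nat.mem_divisors] at hd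
          obtain ⟨⟨hdm, -⟩, u, rfl⟩ := hd
          obtain ⟨v, hv⟩ := hdvd
          show 3^β * u / 3^β ∈ (N / 3^β).divisors
          rw [Nat.mem_divisors, Nat.mul_div_cancel_left _ hp, hv,
            Nat.mul_div_cancel_left _ hp]
          refine ⟨(mul_dvd_mul_iff_left (by positivity : (3:ℕ)^β ≠ 0)).mp (hv ▸ hdm), ?_⟩
          intro h0; rw [h0, mul_zero] at hv; exact hN0 hv
        case hj =>
          intro e he
          rw [Nat.mem_divisors] at he
          rw [Finset.mem_filter, Nat.mem_divisors]
          exact ⟨⟨(mul_dvd_mul_left _ he.1).trans (by rw [Nat.mul_div_cancel' hdvd]), hN0⟩,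
            Dvd.intro e rfl⟩
        case li =>
          intro d hd
          rw [Finset.mem_filter] at hd
          exact Nat.mul_div_cancel' hd.2
        case ri =>
          intro e he
          exact Nat.mul_div_cancel_left _ hp
        case hv =>
          intro d hd
          rw [Finset.mem_filter] at hd
          obtain ⟨-, u, rfl⟩ := hd
          show BOchi (N / (3^β * u)) = BOchi (N / 3^β / (3^β * u / 3^β))
          rw [Nat.mul_div_cancel_left _ hp, Nat.div_div_eq_div_mul]
      rw [hre]
      exact BOchi_sum_div_divisors hNq4
    · rw [BOfilter_pow3_empty hdvd]
      simp
  rw [hfil, zero_add] at hsplit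
  rw [hsplit]
  exact htot

/-- `A ≡ D (mod 4)` : restricted divisor count vs. the diagonal count. -/
lemma BOcard_eq_D_mod4 {α β N : ℕ} (hα : 2 ≤ α) (hβ : Even β) (hN : N % 4 = 3) :
    (((BOdivS α β N).card : ZMod 4)) = ((∑ d ∈ BOdivS α β N, (N / d - 1) : ℕ) : ZMod 4) := by
  have hN0 : N ≠ 0 := by omega
  have key : ∀ u : ℕ, u % 2 = 1 → ((u - 1 : ℕ) : ZMod 4) = 1 - ((BOchi u : ℤ) : ZMod 4) := by
    intro u hodd
    have h14 : u % 4 = 1 ∨ u % 4 = 3 := by omega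
    have hcast : ((u - 1 : ℕ) : ZMod 4) = (((u - 1) % 4 : ℕ) : ZMod 4) :=
      (ZMod.natCast_mod _ 4).symm
    rcases h14 with h | h
    · have hb : BOchi u = 1 := by unfold BOchi; rw [h]; norm_num
      have : (u - 1) % 4 = 0 := by omega
      rw [hcast, this, hb]
      norm_num
    · have hb : BOchi u = -1 := by unfold BOchi; rw [h]; norm_num
      have : (u - 1) % 4 = 2 := by omega
      rw [hcast, this, hb]
      push_cast
      ring
  have per : ∀ d ∈ BOdivS α β N,
      (((N / d - 1 : ℕ)) : ZMod 4) = 1 - ((BOchi (N / d) : ℤ) : ZMod 4) := by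
    intro d hd
    rw [BOdivS, Finset.mem_filter, Nat.mem_divisors] at hd
    have hdN : d ∣ N := hd.1.1
    have hdvd : N / d ∣ N := Nat.div_dvd_of_dvd hdN
    have hodd : (N / d) % 2 = 1 := by
      have : ¬ (2 ∣ N / d) := fun h2 => absurd (h2.trans hdvd) (by omega)
      omega
    exact key _ hodd
  rw [Nat.cast_sum, Finset.sum_congr rfl per, Finset.sum_sub_distrib]
  have : ∑ d ∈ BOdivS α β N, ((BOchi (N / d) : ℤ) : ZMod 4)
      = ((∑ d ∈ BOdivS α β N, BOchi (N / d) : ℤ) : ZMod 4) := by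
    rw [Int.cast_sum]
  rw [this, BOdivS_chi_sum hα hβ hN]
  rw [Int.cast_zero, sub_zero, Finset.sum_const, nsmul_eq_mul, mul_one]
/-- quadruples ((d₁,a),(d₂,b)) with parts in S and d₁a + d₂b = N. -/
def BOW (α β N : ℕ) : Finset ((ℕ×ℕ)×(ℕ×ℕ)) :=
  ((Finset.Ioc 0 N ×ˢ Finset.Ioc 0 N) ×ˢ (Finset.Ioc 0 N ×ˢ Finset.Ioc 0 N)).filter
    (fun q => (¬2^α ∣ q.1.1 ∧ ¬3^β ∣ q.1.1) ∧ (¬2^α ∣ q.2.1 ∧ ¬3^β ∣ q.2.1) ∧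
      q.1.1 * q.1.2 + q.2.1 * q.2.2 = N)

lemma BOmem_W {α β N : ℕ} {q : (ℕ×ℕ)×(ℕ×ℕ)} : q ∈ BOW α β N ↔
    0 < q.1.1 ∧ 0 < q.1.2 ∧ 0 < q.2.1 ∧ 0 < q.2.2 ∧
    (¬2^α ∣ q.1.1 ∧ ¬3^β ∣ q.1.1) ∧ (¬2^α ∣ q.2.1 ∧ ¬3^β ∣ q.2.1) ∧
    q.1.1 * q.1.2 + q.2.1 * q.2.2 = N := by
  obtain ⟨⟨d₁, a⟩, ⟨d₂, b⟩⟩ := q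
  simp only [BOW, Finset.mem_filter, Finset.mem_product, Finset.mem_Ioc]
  constructor
  · rintro ⟨⟨⟨⟨h1, -⟩, ⟨h2, -⟩⟩, ⟨⟨h3, -⟩, ⟨h4, -⟩⟩⟩, hs1, hs2, heq⟩
    exact ⟨h1, h2, h3, h4, hs1, hs2, heq⟩
  · rintro ⟨h1, h2, h3, h4, hs1, hs2, heq⟩
    have hb1 : d₁ * a ≤ N := by nlinarith
    have hb2 : d₂ * b ≤ N := by nlinarith
    have e1 : d₁ ≤ d₁ * a := Nat.le_mul_of_pos_right _ h2
    have e2 : a ≤ d₁ * a := Nat.le_mul_of_pos_left _ h1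
    have e3 : d₂ ≤ d₂ * b := Nat.le_mul_of_pos_right _ h4
    have e4 : b ≤ d₂ * b := Nat.le_mul_of_pos_left _ h3
    exact ⟨⟨⟨⟨h1, by omega⟩, ⟨h2, by omega⟩⟩, ⟨⟨h3, by omega⟩, ⟨h4, by omega⟩⟩⟩,
      hs1, hs2, heq⟩

lemma BOW_card_eq_sum {α β N : ℕ} (hN : 0 < N) :
    (BOW α β N).card =
      ∑ m ∈ Finset.Ico 1 N, (BOdivS α β m).card * (BOdivS α β (N - m)).card := by
  classical
  rw [Finset.card_eq_sum_card_fiberwise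
    (f := fun q => q.1.1 * q.1.2) (t := Finset.Ico 1 N) ?hmem]
  case hmem =>
    intro q hq
    rw [Finset.mem_coe, BOmem_W] at hq
    obtain ⟨h1, h2, h3, h4, -, -, heq⟩ := hq
    rw [Finset.mem_coe, Finset.mem_Ico]
    constructor
    · exact Nat.one_le_iff_ne_zero.mpr (by positivity)
    · nlinarith
  refine Finset.sum_congr rfl (fun m hm => ?_)
  rw [Finset.mem_Ico] at hm
  rw [← Finset.card_product]
  refine Finset.card_bij' (fun q _ => (q.1.1, q.2.1))
    (fun p _ => ((p.1, m / p.1), (p.2, (N - m) / p.2))) ?hi ?hj ?li ?ri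
  case hi =>
    intro q hq
    rw [Finset.mem_filter, BOmem_W] at hq
    obtain ⟨⟨h1, h2, h3, h4, hs1, hs2, heq⟩, hfib⟩ := hq
    have hd1 : q.1.1 ∣ m := hfib ▸ Dvd.intro _ rfl
    have hd2 : q.2.1 ∣ N - m := by
      refine ⟨q.2.2, by omega⟩
    rw [Finset.mem_product, BOdivS, BOdivS, Finset.mem_filter, Finset.mem_filter,
      Nat.mem_divisors, Nat.mem_divisors]
    exact ⟨⟨⟨hd1, by omega⟩, hs1⟩, ⟨⟨hd2, by omega⟩, hs2⟩⟩
  case hj =>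
    intro p hp
    rw [Finset.mem_product, BOdivS, BOdivS, Finset.mem_filter, Finset.mem_filter,
      Nat.mem_divisors, Nat.mem_divisors] at hp
    obtain ⟨⟨⟨hd1, hm0⟩, hs1⟩, ⟨⟨hd2, hnm0⟩, hs2⟩⟩ := hp
    have hp1 : 0 < p.1 := Nat.pos_of_dvd_of_pos hd1 (by omega)
    have hp2 : 0 < p.2 := Nat.pos_of_dvd_of_pos hd2 (by omega)
    rw [Finset.mem_filter, BOmem_W]
    dsimp only
    have e1 : p.1 * (m / p.1) = m := Nat.mul_div_cancel' hd1
    have e2 : p.2 * ((N - m) / p.2) = N - m := Nat.mul_div_cancel' hd2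
    refine ⟨⟨hp1, ?_, hp2, ?_, hs1, hs2, by omega⟩, e1⟩
    · exact Nat.div_pos (Nat.le_of_dvd (by omega) hd1) hp1
    · exact Nat.div_pos (Nat.le_of_dvd (by omega) hd2) hp2
  case li =>
    intro q hq
    rw [Finset.mem_filter, BOmem_W] at hq
    obtain ⟨⟨h1, h2, h3, h4, hs1, hs2, heq⟩, hfib⟩ := hq
    have e1 : q.1.1 * q.1.2 = m := hfib
    have e2 : q.2.1 * q.2.2 = N - m := by omega
    have : m / q.1.1 = q.1.2 := by rw [← e1, Nat.mul_div_cancel_left _ h1]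
    have : (N - m) / q.2.1 = q.2.2 := by rw [← e2, Nat.mul_div_cancel_left _ h3]
    ext <;> simp_all
  case ri =>
    intro p hp
    rfl

/-- `4 ∣ W.card` (as a ZMod 4 statement). -/
lemma BOW_card_zmod4 {α β N : ℕ} (hα : 2 ≤ α) (hβ : Even β) (hN : N % 4 = 3) :
    (((BOW α β N).card : ℕ) : ZMod 4) = 0 := by
  rw [BOW_card_eq_sum (by omega), Nat.cast_sum]
  refine Finset.sum_involution (fun m _ => N - m) ?h1 ?h2 ?h3 ?h4
  case h1 =>
    intro m hm
    rw [Finset.mem_Ico] at hm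
    have hsub : N - (N - m) = m := by omega
    show ((BOdivS α β m).card * (BOdivS α β (N - m)).card : ℕ)
      + ((BOdivS α β (N - m)).card * (BOdivS α β (N - (N - m))).card : ℕ) = (0 : ZMod 4)
    rw [hsub]
    have heven : Even ((BOdivS α β m).card * (BOdivS α β (N - m)).card) := by
      have h23 : m % 4 = 2 ∨ m % 4 = 3 ∨ (N - m) % 4 = 2 ∨ (N - m) % 4 = 3 := by omega
      rcases h23 with h | h | h | h
      · exact (BOdivS_card_even hα hβ (Or.inl h)).mul_right _
      · exact (BOdivS_card_even hα hβ (Or.inr h)).mul_right _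
      · exact (BOdivS_card_even hα hβ (Or.inl h)).mul_left _
      · exact (BOdivS_card_even hα hβ (Or.inr h)).mul_left _
    obtain ⟨k, hk⟩ := heven
    rw [mul_comm ((BOdivS α β (N - m)).card) ((BOdivS α β m).card), hk]
    push_cast
    have h4 : ((4 : ℕ) : ZMod 4) = 0 := by decide
    calc ((k : ZMod 4) + k) + (k + k) = ((4 : ℕ) : ZMod 4) * k := by push_cast; ring
    _ = 0 := by rw [h4, zero_mul]
  case h2 =>
    intro m hm _
    show N - m ≠ m
    rw [Finset.mem_Ico] at hm
    omega
  case h3 =>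
    intro m hm
    show N - m ∈ Finset.Ico 1 N
    rw [Finset.mem_Ico] at hm ⊢
    omega
  case h4 =>
    intro m hm
    show N - (N - m) = m
    rw [Finset.mem_Ico] at hm
    omega
/-- The diagonal count equals `∑_{d ∈ divS N} (N/d - 1)`. -/
lemma BOWdiag_card {α β N : ℕ} (hN : 0 < N) :
    ((BOW α β N).filter (fun q => q.1.1 = q.2.1)).card
      = ∑ d ∈ BOdivS α β N, (N / d - 1) := by
  classical
  have : ∑ d ∈ BOdivS α β N, (N / d - 1)
      = ((BOdivS α β N).sigma (fun d => Finset.Ioc 0 (N / d - 1))).card := by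
    rw [Finset.card_sigma]
    exact Finset.sum_congr rfl (fun d _ => by rw [Nat.card_Ioc]; omega)
  rw [this]
  refine Finset.card_bij' (fun q _ => ⟨q.1.1, q.1.2⟩)
    (fun p _ => ((p.1, p.2), (p.1, N / p.1 - p.2))) ?hi ?hj ?li ?ri
  case hi =>
    intro q hq
    obtain ⟨⟨d, a⟩, d₂, b⟩ := q
    simp only [Finset.mem_filter, BOmem_W] at hq
    obtain ⟨⟨h1, h2, h3, h4, hs1, hs2, heq⟩, hdiag⟩ := hq
    subst hdiag
    have heq' : d * (a + b) = N := by rw [mul_add]; exact heq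
    have hdvd : d ∣ N := Dvd.intro _ heq'
    have hdiveq : N / d = a + b := by
      rw [← heq', Nat.mul_div_cancel_left _ h1]
    simp only [Finset.mem_sigma, Finset.mem_Ioc]
    refine ⟨?_, h2, by omega⟩
    rw [BOdivS, Finset.mem_filter, Nat.mem_divisors]
    exact ⟨⟨hdvd, by omega⟩, hs1⟩
  case hj =>
    intro p hp
    rw [Finset.mem_sigma, Finset.mem_Ioc] at hp
    obtain ⟨hd, ha1, ha2⟩ := hp
    rw [BOdivS, Finset.mem_filter, Nat.mem_divisors] at hd
    obtain ⟨⟨hdvd, -⟩, hs⟩ := hd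
    have hd1 : 0 < p.1 := Nat.pos_of_dvd_of_pos hdvd hN
    have hNd : p.1 * (N / p.1) = N := Nat.mul_div_cancel' hdvd
    have hNd1 : 1 ≤ N / p.1 - p.2 := by omega
    rw [Finset.mem_filter, BOmem_W]
    dsimp only
    refine ⟨⟨hd1, ha1, hd1, by omega, hs, hs, ?_⟩, rfl⟩
    have : p.2 + (N / p.1 - p.2) = N / p.1 := by omega
    rw [← mul_add, this, hNd]
  case li =>
    intro q hq
    obtain ⟨⟨d, a⟩, d₂, b⟩ := q
    simp only [Finset.mem_filter, BOmem_W] at hq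
    obtain ⟨⟨h1, h2, h3, h4, hs1, hs2, heq⟩, hdiag⟩ := hq
    subst hdiag
    have heq' : d * (a + b) = N := by rw [mul_add]; exact heq
    have hdiveq : N / d = a + b := by
      rw [← heq', Nat.mul_div_cancel_left _ h1]
    show ((d, a), (d, N / d - a)) = ((d, a), (d, b))
    have hb : N / d - a = b := by omega
    rw [hb]
  case ri =>
    intro p hp
    rfl

lemma BOW_swap {α β N d a e b : ℕ} (h : ((d,a),(e,b)) ∈ BOW α β N) :
    ((e,b),(d,a)) ∈ BOW α β N := by
  rw [BOmem_W] at h ⊢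
  obtain ⟨h1, h2, h3, h4, hs1, hs2, heq⟩ := h
  have heq' : d * a + e * b = N := heq
  refine ⟨h3, h4, h1, h2, hs2, hs1, ?_⟩
  show e * b + d * a = N
  omega

/-- The off-diagonal count is twice the `<` count. -/
lemma BOWoff_card {α β N : ℕ} :
    ((BOW α β N).filter (fun q => q.1.1 ≠ q.2.1)).card
      = 2 * ((BOW α β N).filter (fun q => q.1.1 < q.2.1)).card := by
  classical
  have hunion : (BOW α β N).filter (fun q => q.1.1 ≠ q.2.1)
      = ((BOW α β N).filter (fun q => q.1.1 < q.2.1))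
        ∪ ((BOW α β N).filter (fun q => q.2.1 < q.1.1)) := by
    ext q
    simp only [Finset.mem_filter, Finset.mem_union]
    by_cases hq : q ∈ BOW α β N
    · simp only [hq, true_and]; omega
    · simp [hq]
  have hdisj : Disjoint ((BOW α β N).filter (fun q => q.1.1 < q.2.1))
      ((BOW α β N).filter (fun q => q.2.1 < q.1.1)) := by
    rw [Finset.disjoint_filter]
    intro q _ h
    omega
  have hswap : ((BOW α β N).filter (fun q => q.2.1 < q.1.1)).card
      = ((BOW α β N).filter (fun q => q.1.1 < q.2.1)).card := by
    refine Finset.card_bij' (fun q _ => (q.2, q.1)) (fun q _ => (q.2, q.1)) ?hi ?hj ?li ?ri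
    all_goals intro q hq
    case li => rfl
    case ri => rfl
    all_goals (
      obtain ⟨⟨d, a⟩, e, b⟩ := q
      rw [Finset.mem_filter] at hq ⊢
      exact ⟨BOW_swap hq.1, hq.2⟩)
  rw [hunion, Finset.card_union_of_disjoint hdisj, hswap]
  omega
/-- Main arithmetic fact: `4 ∣ A + 2·(number of quadruples with d₁ < d₂)`. -/
lemma BOmain_arith {α β N : ℕ} (hα : 2 ≤ α) (hβ : Even β) (hN : N % 4 = 3) :
    (4 : ℕ) ∣ (BOdivS α β N).card
      + 2 * ((BOW α β N).filter (fun q => q.1.1 < q.2.1)).card := by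
  classical
  have hsplit := Finset.card_filter_add_card_filter_not
    (s := BOW α β N) (p := fun q => q.1.1 = q.2.1)
  have hne : (BOW α β N).filter (fun q => ¬ q.1.1 = q.2.1)
      = (BOW α β N).filter (fun q => q.1.1 ≠ q.2.1) := rfl
  rw [hne, BOWoff_card, BOWdiag_card (by omega)] at hsplit
  -- hsplit : D + 2 * Wlt = W.card
  have hW4 : (((BOW α β N).card : ℕ) : ZMod 4) = 0 := BOW_card_zmod4 hα hβ hN
  have hAD : (((BOdivS α β N).card : ZMod 4))
      = ((∑ d ∈ BOdivS α β N, (N / d - 1) : ℕ) : ZMod 4) := BOcard_eq_D_mod4 hα hβ hN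
  have hzero : (((BOdivS α β N).card
      + 2 * ((BOW α β N).filter (fun q => q.1.1 < q.2.1)).card : ℕ) : ZMod 4) = 0 := by
    push_cast
    push_cast at hAD
    rw [hAD]
    have := congrArg (fun x : ℕ => (x : ZMod 4)) hsplit
    push_cast at this
    rw [← this] at hW4
    push_cast at hW4
    linear_combination hW4
  have := (ZMod.natCast_eq_zero_iff _ 4).mp hzero
  exact this
/-- S-restricted partitions of N as a Finset. -/
def BOLam (α β N : ℕ) : Finset (Nat.Partition N) :=
  Finset.univ.filter (fun l => ∀ x ∈ l.parts, ¬2^α ∣ x ∧ ¬3^β ∣ x)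

lemma BOsub_le_parts {N : ℕ} (l : Nat.Partition N) (O : Finset ℕ)
    (hO : O ⊆ l.parts.toFinset) : O.val ≤ l.parts := by
  rw [Multiset.le_iff_count]
  intro x
  by_cases hx : x ∈ O.val
  · have h1 : O.val.count x ≤ 1 := Multiset.nodup_iff_count_le_one.mp O.nodup x
    have hxF : x ∈ l.parts.toFinset := hO hx
    rw [Multiset.mem_toFinset] at hxF
    have h2 : 1 ≤ l.parts.count x := Multiset.one_le_count_iff_mem.mpr hxF
    omega
  · rw [Multiset.count_eq_zero_of_notMem hx]
    omega

/-- The overpartition count equals `∑_λ 2^{#distinct parts}`. -/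
lemma BOcount (α β N : ℕ) :
    biregularOverpartitions (2^α) (3^β) N
      = ∑ l ∈ BOLam α β N, 2 ^ (l.parts.toFinset.card) := by
  classical
  have hset : {p : Multiset ℕ × Multiset ℕ |
      (∀ x ∈ p.1, 0 < x ∧ ¬ 2^α ∣ x ∧ ¬ 3^β ∣ x) ∧
      (∀ x ∈ p.2, 0 < x ∧ ¬ 2^α ∣ x ∧ ¬ 3^β ∣ x) ∧
      p.2.Nodup ∧ p.1.sum + p.2.sum = N} =
      ↑(((BOLam α β N).sigma (fun l => l.parts.toFinset.powerset)).image
        (fun p => (p.1.parts - p.2.val, p.2.val))) := by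
    ext ⟨s, t⟩
    simp only [Set.mem_setOf_eq, Finset.coe_image, Set.mem_image, Finset.mem_coe]
    constructor
    · rintro ⟨hs, ht, hnd, hsum⟩
      have hpos : ∀ {x : ℕ}, x ∈ s + t → 0 < x := by
        intro x hx
        rcases Multiset.mem_add.mp hx with h | h
        · exact (hs x h).1
        · exact (ht x h).1
      refine ⟨⟨⟨s + t, hpos, by rw [Multiset.sum_add]; omega⟩, t.toFinset⟩, ?_, ?_⟩
      · rw [Finset.mem_sigma, Finset.mem_powerset]
        constructor
        · rw [BOLam, Finset.mem_filter]
          refine ⟨Finset.mem_univ _, ?_⟩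
          intro x hx
          rcases Multiset.mem_add.mp hx with h | h
          · exact (hs x h).2
          · exact (ht x h).2
        · intro x hx
          rw [Multiset.mem_toFinset] at hx ⊢
          exact Multiset.mem_add.mpr (Or.inr hx)
      · have htval : t.toFinset.val = t := by
          rw [Multiset.toFinset_val, Multiset.dedup_eq_self.mpr hnd]
        show (s + t - t.toFinset.val, t.toFinset.val) = (s, t)
        rw [htval, add_tsub_cancel_right]
    · rintro ⟨⟨l, O⟩, hmem, heq⟩
      rw [Finset.mem_sigma, Finset.mem_powerset] at hmem
      obtain ⟨hl, hO⟩ := hmem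
      rw [BOLam, Finset.mem_filter] at hl
      have hle : O.val ≤ l.parts := BOsub_le_parts l O hO
      have heq1 : l.parts - O.val = s := (Prod.mk.injEq _ _ _ _ ▸ heq).1
      have heq2 : O.val = t := (Prod.mk.injEq _ _ _ _ ▸ heq).2
      refine ⟨?_, ?_, ?_, ?_⟩
      · intro x hx
        rw [← heq1] at hx
        have hxp : x ∈ l.parts := Multiset.mem_of_le (Multiset.sub_le_self _ _) hx
        exact ⟨l.parts_pos hxp, hl.2 x hxp⟩
      · intro x hx
        rw [← heq2] at hx
        have hxp : x ∈ l.parts := Multiset.mem_of_le hle hx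
        exact ⟨l.parts_pos hxp, hl.2 x hxp⟩
      · rw [← heq2]; exact O.nodup
      · rw [← heq1, ← heq2, ← Multiset.sum_add, tsub_add_cancel_of_le hle, l.parts_sum]
  rw [biregularOverpartitions, hset, Set.ncard_coe_finset]
  have hinj : Set.InjOn (fun p : (Σ _ : Nat.Partition N, Finset ℕ) => (p.1.parts - p.2.val, p.2.val))
      ((BOLam α β N).sigma (fun l => l.parts.toFinset.powerset)) := by
    rintro ⟨l, O⟩ hp ⟨l', O'⟩ hq heq
    rw [Finset.mem_coe, Finset.mem_sigma, Finset.mem_powerset] at hp hq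
    simp only [Prod.mk.injEq] at heq
    obtain ⟨heq1, heq2⟩ := heq
    have hO : O = O' := Finset.val_inj.mp heq2
    have hle : O.val ≤ l.parts := BOsub_le_parts l O hp.2
    have hle' : O'.val ≤ l'.parts := BOsub_le_parts l' O' hq.2
    have hparts : l.parts = l'.parts := by
      have e1 : l.parts - O.val + O.val = l.parts := tsub_add_cancel_of_le hle
      have e2 : l'.parts - O'.val + O'.val = l'.parts := tsub_add_cancel_of_le hle'
      rw [← e1, ← e2, heq1, heq2]
    have hll : l = l' := Nat.Partition.ext hparts
    subst hll
    subst hO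
    rfl
  rw [Finset.card_image_of_injOn hinj, Finset.card_sigma]
  exact Finset.sum_congr rfl (fun l _ => Finset.card_powerset _)
lemma BOLam_one {α β N : ℕ} (hN : 0 < N) :
    ((BOLam α β N).filter (fun l => l.parts.toFinset.card = 1)).card
      = (BOdivS α β N).card := by
  classical
  symm
  refine Finset.card_bij (fun d hd =>
    ⟨Multiset.replicate (N / d) d, ?_, ?_⟩) ?hi ?inj ?surj
  · intro i hi
    rw [Multiset.eq_of_mem_replicate hi]
    rw [BOdivS, Finset.mem_filter, Nat.mem_divisors] at hd
    exact Nat.pos_of_dvd_of_pos hd.1.1 hN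
  · rw [BOdivS, Finset.mem_filter, Nat.mem_divisors] at hd
    rw [Multiset.sum_replicate, smul_eq_mul, Nat.div_mul_cancel hd.1.1]
  case hi =>
    intro d hd
    rw [BOdivS, Finset.mem_filter, Nat.mem_divisors] at hd
    have hd0 : 0 < d := Nat.pos_of_dvd_of_pos hd.1.1 hN
    have hnd0 : N / d ≠ 0 := by
      have := Nat.le_of_dvd hN hd.1.1
      have := Nat.div_pos this hd0
      omega
    rw [Finset.mem_filter]
    constructor
    · rw [BOLam, Finset.mem_filter]
      refine ⟨Finset.mem_univ _, ?_⟩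
      intro x hx
      rw [Multiset.eq_of_mem_replicate hx]
      exact hd.2
    · show (Multiset.replicate (N / d) d).toFinset.card = 1
      rw [Multiset.toFinset_replicate, if_neg hnd0, Finset.card_singleton]
  case inj =>
    intro d hd d' hd' heq
    simp only [Nat.Partition.mk.injEq] at heq
    rw [BOdivS, Finset.mem_filter, Nat.mem_divisors] at hd
    have hd0 : 0 < d := Nat.pos_of_dvd_of_pos hd.1.1 hN
    have hnd0 : N / d ≠ 0 := by
      have := Nat.le_of_dvd hN hd.1.1
      have := Nat.div_pos this hd0
      omega
    have hmem : d ∈ Multiset.replicate (N / d) d :=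
      Multiset.mem_replicate.mpr ⟨hnd0, rfl⟩
    rw [heq] at hmem
    exact Multiset.eq_of_mem_replicate hmem
  case surj =>
    intro l hl
    rw [Finset.mem_filter] at hl
    obtain ⟨hlam, hcard⟩ := hl
    obtain ⟨d, hd⟩ := Finset.card_eq_one.mp hcard
    have hall : ∀ x ∈ l.parts, x = d := by
      intro x hx
      have : x ∈ l.parts.toFinset := Multiset.mem_toFinset.mpr hx
      rw [hd, Finset.mem_singleton] at this
      exact this
    have hrep : l.parts = Multiset.replicate l.parts.card d :=
      Multiset.eq_replicate.mpr ⟨rfl, hall⟩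
    have hdmem : d ∈ l.parts := by
      have : d ∈ l.parts.toFinset := by rw [hd]; exact Finset.mem_singleton_self d
      exact Multiset.mem_toFinset.mp this
    have hd0 : 0 < d := l.parts_pos hdmem
    have hsum : l.parts.card * d = N := by
      have := l.parts_sum
      rw [hrep, Multiset.sum_replicate, smul_eq_mul] at this
      exact this
    have hdvd : d ∣ N := ⟨l.parts.card, by rw [mul_comm]; exact hsum.symm⟩
    have hcnt : N / d = l.parts.card := by
      have h := Nat.mul_div_cancel (l.parts.card) hd0
      rw [hsum] at h
      exact h.symm ▸ h
    rw [BOLam, Finset.mem_filter] at hlam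
    refine ⟨d, ?_, ?_⟩
    · rw [BOdivS, Finset.mem_filter, Nat.mem_divisors]
      exact ⟨⟨hdvd, by omega⟩, hlam.2 d hdmem⟩
    · apply Nat.Partition.ext
      show Multiset.replicate (N / d) d = l.parts
      rw [hcnt, ← hrep]

lemma BOLam_two {α β N : ℕ} (hN : 0 < N) :
    ((BOLam α β N).filter (fun l => l.parts.toFinset.card = 2)).card
      = ((BOW α β N).filter (fun q => q.1.1 < q.2.1)).card := by
  classical
  symm
  refine Finset.card_bij (fun q hq =>
    ⟨Multiset.replicate q.1.2 q.1.1 + Multiset.replicate q.2.2 q.2.1, ?_, ?_⟩) ?hi ?inj ?surj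
  · intro i hi
    rw [Finset.mem_filter, BOmem_W] at hq
    rcases Multiset.mem_add.mp hi with h | h
    · rw [Multiset.eq_of_mem_replicate h]; exact hq.1.1
    · rw [Multiset.eq_of_mem_replicate h]; exact hq.1.2.2.1
  · rw [Finset.mem_filter, BOmem_W] at hq
    rw [Multiset.sum_add, Multiset.sum_replicate, Multiset.sum_replicate,
      smul_eq_mul, smul_eq_mul, mul_comm q.1.2 q.1.1, mul_comm q.2.2 q.2.1]
    exact hq.1.2.2.2.2.2.2
  case hi =>
    intro q hq
    rw [Finset.mem_filter, BOmem_W] at hq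
    obtain ⟨⟨h1, h2, h3, h4, hs1, hs2, heq⟩, hlt⟩ := hq
    rw [Finset.mem_filter]
    constructor
    · rw [BOLam, Finset.mem_filter]
      refine ⟨Finset.mem_univ _, ?_⟩
      intro x hx
      rcases Multiset.mem_add.mp hx with h | h
      · rw [Multiset.eq_of_mem_replicate h]; exact hs1
      · rw [Multiset.eq_of_mem_replicate h]; exact hs2
    · show (Multiset.replicate q.1.2 q.1.1 + Multiset.replicate q.2.2 q.2.1).toFinset.card = 2
      have hlt' : q.1.1 < q.2.1 := hlt
      rw [Multiset.toFinset_add, Multiset.toFinset_replicate, Multiset.toFinset_replicate,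
        if_neg (by omega : q.1.2 ≠ 0), if_neg (by omega : q.2.2 ≠ 0),
        ← Finset.insert_eq]
      exact Finset.card_pair (by omega)
  case inj =>
    intro q hq q' hq' heq
    obtain ⟨⟨d, a⟩, e, b⟩ := q
    obtain ⟨⟨d', a'⟩, e', b'⟩ := q'
    rw [Finset.mem_filter] at hq hq'
    have hlt : d < e := hq.2
    have hlt' : d' < e' := hq'.2
    rw [BOmem_W] at hq hq'
    obtain ⟨⟨h1, h2, h3, h4, -, -, -⟩, -⟩ := hq
    obtain ⟨⟨h1', h2', h3', h4', -, -, -⟩, -⟩ := hq'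
    have ha : 0 < a := h2
    have hb : 0 < b := h4
    have ha' : 0 < a' := h2'
    have hb' : 0 < b' := h4'
    simp only [Nat.Partition.mk.injEq] at heq
    have htf := congrArg Multiset.toFinset heq
    rw [Multiset.toFinset_add, Multiset.toFinset_add,
      Multiset.toFinset_replicate, Multiset.toFinset_replicate,
      Multiset.toFinset_replicate, Multiset.toFinset_replicate,
      if_neg (by omega : a ≠ 0), if_neg (by omega : b ≠ 0),
      if_neg (by omega : a' ≠ 0), if_neg (by omega : b' ≠ 0),
      ← Finset.insert_eq, ← Finset.insert_eq] at htf
    have hdm : d = d' ∨ d = e' := by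
      have : d ∈ ({d', e'} : Finset ℕ) := htf ▸ Finset.mem_insert_self d {e}
      simpa using this
    have hem : e = d' ∨ e = e' := by
      have : e ∈ ({d', e'} : Finset ℕ) := htf ▸ Finset.mem_insert_of_mem (Finset.mem_singleton_self e)
      simpa using this
    have hd'm : d' = d ∨ d' = e := by
      have : d' ∈ ({d, e} : Finset ℕ) := htf ▸ Finset.mem_insert_self d' {e'}
      simpa using this
    have hdd : d = d' ∧ e = e' := by
      rcases hdm with h | h <;> rcases hem with h2 | h2 <;> rcases hd'm with h3 | h3 <;> omega
    obtain ⟨hdd1, hdd2⟩ := hdd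
    subst hdd1; subst hdd2
    have hca := congrArg (Multiset.count d) heq
    have hcb := congrArg (Multiset.count e) heq
    rw [Multiset.count_add, Multiset.count_add, Multiset.count_replicate,
      Multiset.count_replicate, Multiset.count_replicate, Multiset.count_replicate] at hca hcb
    have hne1 : e ≠ d := by omega
    have hne2 : d ≠ e := by omega
    simp [hne1, hne2] at hca hcb
    simp only [Prod.mk.injEq]
    refine ⟨⟨trivial, ?_⟩, trivial, ?_⟩ <;> omega
  case surj =>
    intro l hl
    rw [Finset.mem_filter] at hl
    obtain ⟨hlam, hcard⟩ := hl
    rw [BOLam, Finset.mem_filter] at hlam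
    obtain ⟨x, y, hxy, htf⟩ := Finset.card_eq_two.mp hcard
    rcases Nat.lt_or_ge x y with hlt | hge
    · have hxm : x ∈ l.parts := by
        rw [← Multiset.mem_toFinset, htf]; exact Finset.mem_insert_self _ _
      have hym : y ∈ l.parts := by
        rw [← Multiset.mem_toFinset, htf]
        exact Finset.mem_insert_of_mem (Finset.mem_singleton_self y)
      have hdec : Multiset.replicate (l.parts.count x) x
          + Multiset.replicate (l.parts.count y) y = l.parts := by
        have h0 := Multiset.toFinset_sum_count_nsmul_eq l.parts
        rw [htf, Finset.sum_pair hxy, Multiset.nsmul_singleton, Multiset.nsmul_singleton] at h0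
        exact h0
      have hsum : x * l.parts.count x + y * l.parts.count y = N := by
        have := l.parts_sum
        rw [← hdec, Multiset.sum_add, Multiset.sum_replicate, Multiset.sum_replicate,
          smul_eq_mul, smul_eq_mul] at this
        rw [mul_comm x _, mul_comm y _]
        exact this
      refine ⟨((x, l.parts.count x), (y, l.parts.count y)), ?_, ?_⟩
      · rw [Finset.mem_filter, BOmem_W]
        exact ⟨⟨l.parts_pos hxm, Multiset.count_pos.mpr hxm, l.parts_pos hym,
          Multiset.count_pos.mpr hym, hlam.2 x hxm, hlam.2 y hym, hsum⟩, hlt⟩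
      · apply Nat.Partition.ext
        exact hdec
    · have hlt : y < x := by omega
      have hxm : x ∈ l.parts := by
        rw [← Multiset.mem_toFinset, htf]; exact Finset.mem_insert_self _ _
      have hym : y ∈ l.parts := by
        rw [← Multiset.mem_toFinset, htf]
        exact Finset.mem_insert_of_mem (Finset.mem_singleton_self y)
      have hdec : Multiset.replicate (l.parts.count y) y
          + Multiset.replicate (l.parts.count x) x = l.parts := by
        have h0 := Multiset.toFinset_sum_count_nsmul_eq l.parts
        rw [htf, Finset.sum_pair hxy, Multiset.nsmul_singleton, Multiset.nsmul_singleton] at h0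
        rw [add_comm] at h0
        exact h0
      have hsum : y * l.parts.count y + x * l.parts.count x = N := by
        have := l.parts_sum
        rw [← hdec, Multiset.sum_add, Multiset.sum_replicate, Multiset.sum_replicate,
          smul_eq_mul, smul_eq_mul] at this
        rw [mul_comm x _, mul_comm y _]
        exact this
      refine ⟨((y, l.parts.count y), (x, l.parts.count x)), ?_, ?_⟩
      · rw [Finset.mem_filter, BOmem_W]
        exact ⟨⟨l.parts_pos hym, Multiset.count_pos.mpr hym, l.parts_pos hxm,
          Multiset.count_pos.mpr hxm, hlam.2 y hym, hlam.2 x hxm, hsum⟩, hlt⟩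
      · apply Nat.Partition.ext
        exact hdec

theorem biregular_overpartition_pow2_pow3_12n3_mod8 (n α β : ℕ) (hα : 2 ≤ α) (hβ : 1 ≤ β)
    (h : (Odd α ∧ Even β) ∨ (Even α ∧ Even β)) :
    8 ∣ biregularOverpartitions (2 ^ α) (3 ^ β) (12 * n + 3) := by
  classical
  have hβe : Even β := h.elim And.right And.right
  set N := 12 * n + 3 with hNdef
  have hN4 : N % 4 = 3 := by omega
  have hN0 : 0 < N := by omega
  rw [BOcount]
  have harith := BOmain_arith (α := α) (β := β) (N := N) hα hβe hN4
  rw [← BOLam_one hN0, ← BOLam_two hN0] at harith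
  obtain ⟨j, hj⟩ := harith
  suffices hz : ((∑ l ∈ BOLam α β N, 2 ^ l.parts.toFinset.card : ℕ) : ZMod 8) = 0 by
    exact (ZMod.natCast_eq_zero_iff _ 8).mp hz
  rw [Nat.cast_sum]
  rw [← Finset.sum_filter_add_sum_filter_not (BOLam α β N)
    (fun l => l.parts.toFinset.card = 1)
    (fun l => ((2 ^ l.parts.toFinset.card : ℕ) : ZMod 8))]
  rw [← Finset.sum_filter_add_sum_filter_not
    ((BOLam α β N).filter (fun l => ¬ l.parts.toFinset.card = 1))
    (fun l => l.parts.toFinset.card = 2)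
    (fun l => ((2 ^ l.parts.toFinset.card : ℕ) : ZMod 8))]
  have hF2 : ((BOLam α β N).filter (fun l => ¬ l.parts.toFinset.card = 1)).filter
      (fun l => l.parts.toFinset.card = 2)
      = (BOLam α β N).filter (fun l => l.parts.toFinset.card = 2) := by
    ext l
    simp only [Finset.mem_filter]
    constructor
    · rintro ⟨⟨h1, h2⟩, h3⟩; exact ⟨h1, h3⟩
    · rintro ⟨h1, h3⟩; exact ⟨⟨h1, by omega⟩, h3⟩
  rw [hF2]
  have hterm1 : ∀ l ∈ (BOLam α β N).filter (fun l => l.parts.toFinset.card = 1),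
      ((2 ^ l.parts.toFinset.card : ℕ) : ZMod 8) = 2 := by
    intro l hl
    rw [Finset.mem_filter] at hl
    rw [hl.2]; norm_num
  have hterm2 : ∀ l ∈ (BOLam α β N).filter (fun l => l.parts.toFinset.card = 2),
      ((2 ^ l.parts.toFinset.card : ℕ) : ZMod 8) = 4 := by
    intro l hl
    rw [Finset.mem_filter] at hl
    rw [hl.2]; norm_num
  have hterm3 : ∀ l ∈ ((BOLam α β N).filter (fun l => ¬ l.parts.toFinset.card = 1)).filter
      (fun l => ¬ l.parts.toFinset.card = 2),
      ((2 ^ l.parts.toFinset.card : ℕ) : ZMod 8) = 0 := by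
    intro l hl
    rw [Finset.mem_filter, Finset.mem_filter] at hl
    obtain ⟨⟨hlam, hk1⟩, hk2⟩ := hl
    have hk0 : l.parts.toFinset.card ≠ 0 := by
      intro h0
      have he : l.parts.toFinset = ∅ := Finset.card_eq_zero.mp h0
      have hp : l.parts = 0 := Multiset.toFinset_eq_empty.mp he
      have hs := l.parts_sum
      rw [hp, Multiset.sum_zero] at hs
      omega
    have hsplit : l.parts.toFinset.card = 3 + (l.parts.toFinset.card - 3) := by omega
    rw [hsplit]
    push_cast
    rw [pow_add]
    have h23 : (2 : ZMod 8) ^ 3 = 0 := by decide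
    rw [h23, zero_mul]
  rw [Finset.sum_congr rfl hterm1, Finset.sum_congr rfl hterm2,
    Finset.sum_congr rfl hterm3]
  rw [Finset.sum_const, Finset.sum_const, Finset.sum_const_zero, add_zero,
    nsmul_eq_mul, nsmul_eq_mul]
  have hnat : (2 * (((BOLam α β N).filter (fun l => l.parts.toFinset.card = 1)).card
      + 2 * ((BOLam α β N).filter (fun l => l.parts.toFinset.card = 2)).card) : ℕ)
      = 8 * j := by omega
  have hc := congrArg (fun x : ℕ => (x : ZMod 8)) hnat
  push_cast at hc
  have h8 : (8 : ZMod 8) = 0 := by decide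
  rw [h8, zero_mul] at hc
  linear_combination hc
end

section
/- For every positive integer n ≥ 1 and all coprime integers ℓ1, ℓ2 > 1, the number of (ℓ1, ℓ2)-biregular overpartitions of n is even, i.e. B̄_{ℓ1,ℓ2}(n) ≡ 0 (mod 2). -/
/-- A finite set admitting a fixed-point-free involution has even cardinality. -/
lemma even_card_of_involution {α : Type*} [DecidableEq α] (f : α → α) :
    ∀ n : ℕ, ∀ S : Finset α, S.card = n →
      (∀ a ∈ S, f a ∈ S) → (∀ a ∈ S, f (f a) = a) → (∀ a ∈ S, f a ≠ a) →
      Even S.card := by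
  intro n
  induction n using Nat.strong_induction_on with
  | _ n ih =>
    intro S hcard h1 h2 h3
    rcases S.eq_empty_or_nonempty with hS | ⟨a, ha⟩
    · simp [hS]
    · have hfa : f a ∈ S := h1 a ha
      have hne : f a ≠ a := h3 a ha
      set S' : Finset α := (S.erase a).erase (f a) with hS'
      have hfa' : f a ∈ S.erase a := Finset.mem_erase.2 ⟨hne, hfa⟩
      have hcard' : S'.card + 2 = S.card := by
        rw [hS', Finset.card_erase_of_mem hfa', Finset.card_erase_of_mem ha]
        have h2le : 2 ≤ S.card := by
          have := Finset.one_lt_card.2 ⟨f a, hfa, a, ha, hne⟩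
          omega
        omega
      have hsub : ∀ b ∈ S', b ∈ S := by
        intro b hb
        exact Finset.mem_of_mem_erase (Finset.mem_of_mem_erase hb)
      have hmem' : ∀ b ∈ S', f b ∈ S' := by
        intro b hb
        have hbS := hsub b hb
        have hb1 : b ≠ f a := (Finset.mem_erase.1 hb).1
        have hb2 : b ≠ a := (Finset.mem_erase.1 (Finset.mem_of_mem_erase hb)).1
        refine Finset.mem_erase.2 ⟨?_, Finset.mem_erase.2 ⟨?_, h1 b hbS⟩⟩
        · intro hfb
          apply hb2
          rw [← h2 b hbS, hfb, h2 a ha]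
        · intro hfb
          apply hb1
          rw [← h2 b hbS, hfb]
      have : Even S'.card := by
        refine ih S'.card ?_ S' rfl hmem' (fun b hb => h2 b (hsub b hb))
          (fun b hb => h3 b (hsub b hb))
        omega
      rw [← hcard']
      exact this.add even_two

/-- The largest element of a nonzero multiset of naturals (0 for the zero multiset). -/
noncomputable def Multiset.mx (u : Multiset ℕ) : ℕ :=
  if h : u = 0 then 0 else u.toFinset.max' (by simpa [Multiset.toFinset_nonempty] using h)

lemma Multiset.mx_mem {u : Multiset ℕ} (h : u ≠ 0) : u.mx ∈ u := by
  rw [Multiset.mx, dif_neg h]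
  exact Multiset.mem_toFinset.1 (Finset.max'_mem _ _)

lemma Multiset.le_mx {u : Multiset ℕ} {x : ℕ} (h : x ∈ u) : x ≤ u.mx := by
  have hu : u ≠ 0 := by rintro rfl; simp at h
  rw [Multiset.mx, dif_neg hu]
  exact Finset.le_max' _ _ (Multiset.mem_toFinset.2 h)

/-- Toggle the overline on (one copy of) the largest part of an overpartition. -/
noncomputable def opFlip (p : Multiset ℕ × Multiset ℕ) : Multiset ℕ × Multiset ℕ :=
  if (p.1 + p.2).mx ∈ p.2 then ((p.1 + p.2).mx ::ₘ p.1, p.2.erase (p.1 + p.2).mx)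
  else (p.1.erase (p.1 + p.2).mx, (p.1 + p.2).mx ::ₘ p.2)


theorem biregular_overpartition_even (ℓ₁ ℓ₂ n : ℕ) (h1 : 1 < ℓ₁) (h2 : 1 < ℓ₂)
    (hco : Nat.Coprime ℓ₁ ℓ₂) (hn : 1 ≤ n) :
    2 ∣ biregularOverpartitions ℓ₁ ℓ₂ n := by
  classical
  set S : Set (Multiset ℕ × Multiset ℕ) := {p : Multiset ℕ × Multiset ℕ |
    (∀ x ∈ p.1, 0 < x ∧ ¬ ℓ₁ ∣ x ∧ ¬ ℓ₂ ∣ x) ∧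
    (∀ x ∈ p.2, 0 < x ∧ ¬ ℓ₁ ∣ x ∧ ¬ ℓ₂ ∣ x) ∧
    p.2.Nodup ∧ p.1.sum + p.2.sum = n} with hSdef
  -- bounding multiset
  set T : Multiset ℕ := n • (Multiset.range (n + 1)) with hT
  have hboundT : ∀ s : Multiset ℕ, (∀ x ∈ s, 0 < x) → s.sum ≤ n → s ≤ T := by
    intro s hpos hsum
    rw [Multiset.le_iff_count]
    intro x
    by_cases hx : x ∈ s
    · have hxn : x ≤ n := le_trans (Multiset.single_le_sum (fun y _ => Nat.zero_le y) x hx) hsum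
      have hcount : s.count x ≤ Multiset.card s := Multiset.count_le_card x s
      have hcards : Multiset.card s ≤ s.sum := by
        have := Multiset.card_nsmul_le_sum (fun y hy => hpos y hy)
        simpa using this
      have hcx : s.count x ≤ n := le_trans hcount (le_trans hcards hsum)
      have : T.count x = n := by
        rw [hT, Multiset.count_nsmul,
          Multiset.count_eq_one_of_mem (Multiset.nodup_range _)
            (Multiset.mem_range.2 (Nat.lt_succ_of_le hxn)), mul_one]
      omega
    · simp [Multiset.count_eq_zero_of_notMem hx]
  have hfin : S.Finite := by
    have : S ⊆ {p : Multiset ℕ × Multiset ℕ | p.1 ∈ T.powerset ∧ p.2 ∈ T.powerset} := by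
      rintro ⟨s, t⟩ ⟨hs, ht, hnd, hsum⟩
      have hsum' : s.sum + t.sum = n := hsum
      constructor
      · exact Multiset.mem_powerset.2 (hboundT s (fun x hx => (hs x hx).1) (by omega))
      · exact Multiset.mem_powerset.2 (hboundT t (fun x hx => (ht x hx).1) (by omega))
    exact Set.Finite.subset (Set.Finite.prod T.powerset.finite_toSet T.powerset.finite_toSet) this
  -- the involution
  have key : ∀ p ∈ hfin.toFinset, opFlip p ∈ hfin.toFinset ∧ opFlip (opFlip p) = p ∧
      opFlip p ≠ p := by
    rintro ⟨s, t⟩ hp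
    rw [Set.Finite.mem_toFinset] at hp
    obtain ⟨hs, ht, hnd, hsum⟩ := hp
    have hsum' : s.sum + t.sum = n := hsum
    set m : ℕ := (s + t).mx with hm
    have hne0 : s + t ≠ 0 := by
      intro h0
      have h1 : (s + t).sum = 0 := by rw [h0]; simp
      rw [Multiset.sum_add] at h1
      omega
    have hmem : m ∈ s + t := Multiset.mx_mem hne0
    by_cases hmt : m ∈ t
    · -- overlined largest part: un-overline it
      have hflip : opFlip (s, t) = (m ::ₘ s, t.erase m) := by
        rw [opFlip]
        simp only [← hm, hmt, if_pos]
      have hcomb : (m ::ₘ s) + t.erase m = s + t := by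
        conv_rhs => rw [← Multiset.cons_erase hmt]
        simp only [← Multiset.singleton_add]
        abel
      have hsumt : (t.erase m).sum + m = t.sum := by
        have := congrArg Multiset.sum (Multiset.cons_erase hmt)
        rw [Multiset.sum_cons] at this
        omega
      have hmemS : opFlip (s, t) ∈ S := by
        rw [hflip]
        refine ⟨?_, ?_, hnd.erase m, ?_⟩
        · intro x hx
          rcases Multiset.mem_cons.1 hx with rfl | hx'
          · exact ht _ hmt
          · exact hs x hx'
        · intro x hx
          exact ht x (Multiset.mem_of_mem_erase hx)
        · simp only [Multiset.sum_cons]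
          omega
      refine ⟨Set.Finite.mem_toFinset hfin |>.2 hmemS, ?_, ?_⟩
      · rw [hflip, opFlip]
        have hm2 : ((m ::ₘ s) + t.erase m).mx = m := by rw [hcomb]
        simp only [hm2]
        rw [if_neg (Multiset.Nodup.notMem_erase hnd)]
        simp only [Multiset.erase_cons_head, Multiset.cons_erase hmt]
      · rw [hflip]
        intro h
        have : t.erase m = t := congrArg Prod.snd h
        exact (Multiset.Nodup.notMem_erase hnd) (this.symm ▸ hmt)
    · -- largest part not overlined: overline it
      have hms : m ∈ s := by
        rcases Multiset.mem_add.1 hmem with h | h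
        · exact h
        · exact absurd h hmt
      have hflip : opFlip (s, t) = (s.erase m, m ::ₘ t) := by
        rw [opFlip]
        simp only [← hm]
        rw [if_neg hmt]
      have hcomb : s.erase m + (m ::ₘ t) = s + t := by
        conv_rhs => rw [← Multiset.cons_erase hms]
        simp only [← Multiset.singleton_add]
        abel
      have hsums : (s.erase m).sum + m = s.sum := by
        have := congrArg Multiset.sum (Multiset.cons_erase hms)
        rw [Multiset.sum_cons] at this
        omega
      have hmemS : opFlip (s, t) ∈ S := by
        rw [hflip]
        refine ⟨?_, ?_, Multiset.nodup_cons.2 ⟨hmt, hnd⟩, ?_⟩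
        · intro x hx
          exact hs x (Multiset.mem_of_mem_erase hx)
        · intro x hx
          rcases Multiset.mem_cons.1 hx with rfl | hx'
          · exact hs _ hms
          · exact ht x hx'
        · simp only [Multiset.sum_cons]
          omega
      refine ⟨Set.Finite.mem_toFinset hfin |>.2 hmemS, ?_, ?_⟩
      · rw [hflip, opFlip]
        have hm2 : (s.erase m + (m ::ₘ t)).mx = m := by rw [hcomb]
        simp only [hm2]
        rw [if_pos (Multiset.mem_cons_self m t)]
        simp only [Multiset.erase_cons_head, Multiset.cons_erase hms]
      · rw [hflip]
        intro h
        have : m ::ₘ t = t := congrArg Prod.snd h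
        exact hmt (this ▸ Multiset.mem_cons_self m t)
  have heven : Even hfin.toFinset.card :=
    even_card_of_involution opFlip hfin.toFinset.card hfin.toFinset rfl
      (fun a ha => (key a ha).1) (fun a ha => (key a ha).2.1) (fun a ha => (key a ha).2.2)
  rw [biregularOverpartitions, ← hSdef, Set.ncard_eq_toFinset_card S hfin]
  exact heven.two_dvd
end
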